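/- arXiv:2406.04001 — 14 statements merged into one kernel-verified Lean document; each statement's English description precedes it below -/
import Mathlib

section
/- Let D ⊆ ℝ^d, let f : D → ℝ be continuous, and suppose f admits an ECL (L, F, G, Φ). Then the infimum of f over D equals the infimum of the first coordinate γ over F, i.e., inf_{x ∈ D} f(x) = inf_{(γ,ζ₁) ∈ F} γ, as an equality of infima in the extended real numbers (either side may be −∞ or +∞). -/
open Set Filter Topology

/-- An Extended Convex Lifting (ECL) of a function `f : D → ℝ` with `D ⊆ ℝ^d`.
It consists of a lifted set `L ⊆ ℝ^d × ℝ × ℝ^dξ`, a convex set `F ⊆ ℝ × ℝ^{d₁}`,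
a nonempty auxiliary set `G ⊆ ℝ^{d₂}`, and a bijection `Φ` from `L` onto `F ×ˢ G`
whose inverse is the restriction of a `C²` map defined on an open set containing
`F ×ˢ G`, such that the projection of `L` onto the `(x, γ)` coordinates sits
between the strict epigraph of `f` and the closure of its non-strict epigraph,
and the first output coordinate of `Φ` is `γ`. -/
structure ECL (d dξ d₁ d₂ : ℕ) (D : Set (Fin d → ℝ)) (f : (Fin d → ℝ) → ℝ) where
  L : Set ((Fin d → ℝ) × ℝ × (Fin dξ → ℝ))
  F : Set (ℝ × (Fin d₁ → ℝ))
  G : Set (Fin d₂ → ℝ)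
  Φ : ((Fin d → ℝ) × ℝ × (Fin dξ → ℝ)) → (ℝ × (Fin d₁ → ℝ)) × (Fin d₂ → ℝ)
  convex_F : Convex ℝ F
  nonempty_G : G.Nonempty
  maps_Φ : ∀ p ∈ L, Φ p ∈ F ×ˢ G
  injOn_Φ : Set.InjOn Φ L
  surjOn_Φ : F ×ˢ G ⊆ Φ '' L
  inv_C2 : ∃ (U : Set ((ℝ × (Fin d₁ → ℝ)) × (Fin d₂ → ℝ)))
      (Ψ : ((ℝ × (Fin d₁ → ℝ)) × (Fin d₂ → ℝ)) → ((Fin d → ℝ) × ℝ × (Fin dξ → ℝ))),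
      IsOpen U ∧ F ×ˢ G ⊆ U ∧ ContDiffOn ℝ 2 Ψ U ∧ ∀ p ∈ L, Ψ (Φ p) = p
  proj_lower : ∀ x ∈ D, ∀ γ : ℝ, f x < γ → ∃ ξ, (x, γ, ξ) ∈ L
  proj_upper : ∀ x γ ξ, (x, γ, ξ) ∈ L →
      (x, γ) ∈ closure {q : (Fin d → ℝ) × ℝ | q.1 ∈ D ∧ f q.1 ≤ q.2}
  fst_Φ : ∀ p ∈ L, (Φ p).1.1 = p.2.1

/-- **ECL convex equivalence** (Theorem 3.1): if a continuous function `f : D → ℝ`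
admits an ECL `(L, F, G, Φ)`, then `inf_{x ∈ D} f(x) = inf_{(γ,ζ₁) ∈ F} γ`,
as an equality of infima in the extended real numbers. -/
theorem ecl_inf_eq {d dξ d₁ d₂ : ℕ} {D : Set (Fin d → ℝ)} {f : (Fin d → ℝ) → ℝ}
    (hf : ContinuousOn f D) (E : ECL d dξ d₁ d₂ D f) :
    sInf ((fun x => (f x : EReal)) '' D) =
      sInf ((fun q : ℝ × (Fin d₁ → ℝ) => (q.1 : EReal)) '' E.F) := by
  apply le_antisymm
  · apply le_sInf
    rintro b ⟨⟨γ, ζ⟩, hF, rfl⟩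
    obtain ⟨g, hg⟩ := E.nonempty_G
    obtain ⟨p, hpL, hΦ⟩ := E.surjOn_Φ (show ((γ, ζ), g) ∈ E.F ×ˢ E.G from ⟨hF, hg⟩)
    have hγ : γ = p.2.1 := by
      have h := E.fst_Φ p hpL
      rw [hΦ] at h
      exact h
    have hcl := E.proj_upper p.1 p.2.1 p.2.2 (by simpa using hpL)
    simp only [hγ]
    by_contra hlt
    push_neg at hlt
    obtain ⟨r, hr1, hr2⟩ := EReal.lt_iff_exists_real_btwn.1 hlt
    have hε : (0 : ℝ) < r - p.2.1 := by
      have : (p.2.1 : ℝ) < r := by exact_mod_cast hr1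
      linarith
    obtain ⟨q, hqS, hqd⟩ := Metric.mem_closure_iff.1 hcl (r - p.2.1) hε
    have hd2 : dist p.2.1 q.2 < r - p.2.1 := by
      rw [Prod.dist_eq] at hqd
      exact lt_of_le_of_lt (le_max_right _ _) hqd
    have hq2 : q.2 < r := by
      rw [Real.dist_eq, abs_sub_lt_iff] at hd2
      linarith [hd2.2]
    have h1 : sInf ((fun x => (f x : EReal)) '' D) ≤ (f q.1 : EReal) :=
      sInf_le ⟨q.1, hqS.1, rfl⟩
    have h2 : (f q.1 : EReal) ≤ (r : EReal) := by
      exact_mod_cast le_trans hqS.2 hq2.le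
    exact absurd (h1.trans h2) (not_le.2 hr2)
  · apply le_sInf
    rintro b ⟨x, hx, rfl⟩
    by_contra hlt
    push_neg at hlt
    obtain ⟨r, hr1, hr2⟩ := EReal.lt_iff_exists_real_btwn.1 hlt
    have hfr : f x < r := by exact_mod_cast hr1
    obtain ⟨ξ, hξ⟩ := E.proj_lower x hx r hfr
    have hmem := E.maps_Φ _ hξ
    have hfst := E.fst_Φ _ hξ
    have h1 : sInf ((fun q : ℝ × (Fin d₁ → ℝ) => (q.1 : EReal)) '' E.F)
        ≤ ((E.Φ (x, r, ξ)).1.1 : EReal) :=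
      sInf_le ⟨(E.Φ (x, r, ξ)).1, hmem.1, rfl⟩
    rw [hfst] at h1
    exact absurd h1 (not_le.2 hr2)
end

section
/- Let D ⊆ ℝ^d be open, let f : D → ℝ be locally Lipschitz continuous, and suppose f admits an ECL (L, F, G, Φ). If x ∈ D is non-degenerate and is not a global minimizer of f on D, then there exists a nonzero direction v ∈ ℝ^d, v ≠ 0, such that limsup_{t → 0⁺} (f(x + t·v) − f(x))/t < 0. -/
/-!
Lift `x` to `p₀ = (x, f x, ξ₀) ∈ L`, and a point `x'` with `f x' < f x` to some `p₁ ∈ L` at a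
level `γ₁ < f x`. As `F` is convex, the segment from `Φ p₀` to `Φ p₁` (keeping the `G`-component
of `Φ p₀`) stays in `F × G`; its image under the `C²` inverse of `Φ` is a path `c` in `L`,
differentiable at `0`, starting at `p₀` and with level `f x - t δ`, where `δ = f x - γ₁ > 0`.
Points of `L` lie in the closed epigraph and `f` is continuous, so `f (c t).1 ≤ f x - t δ`.
Lipschitz continuity makes `f (x + t v)` and `f (c t).1` differ by `o(t)` for `v = (c' 0).1`, so
the difference quotient in direction `v` is eventually at most `-δ / 2`; in particular `v ≠ 0`.
-/

open Set Filter Topology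

section Descent

variable {E : Type*} [NormedAddCommGroup E] [NormedSpace ℝ E]

theorem isLittleO_apply_add_smul_sub_apply {f : E → ℝ} {K : NNReal} {s : Set E} {x v : E}
    {c : ℝ → E} (hs : s ∈ 𝓝 x) (hf : LipschitzOnWith K f s) (hc : HasDerivAt c v 0)
    (hc0 : c 0 = x) :
    (fun t : ℝ => f (x + t • v) - f (c t)) =o[𝓝 0] fun t => t := by
  have hlin : Tendsto (fun t : ℝ => x + t • v) (𝓝 0) (𝓝 x) := by
    have hcont : Continuous fun t : ℝ => x + t • v := by fun_prop
    simpa using hcont.tendsto 0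
  have hcurve : Tendsto c (𝓝 0) (𝓝 x) := hc0 ▸ hc.continuousAt.tendsto
  have hbound : ∀ᶠ t in 𝓝 (0 : ℝ),
      ‖f (x + t • v) - f (c t)‖ ≤ K * ‖c t - x - t • v‖ := by
    filter_upwards [hlin hs, hcurve hs] with t hlt hct
    calc ‖f (x + t • v) - f (c t)‖ = dist (f (x + t • v)) (f (c t)) := (dist_eq_norm _ _).symm
      _ ≤ K * dist (x + t • v) (c t) := hf.dist_le_mul _ hlt _ hct
      _ = K * ‖c t - x - t • v‖ := by rw [dist_eq_norm', sub_sub]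
  have hderiv : (fun t : ℝ => c t - x - t • v) =o[𝓝 0] fun t => t := by
    simpa [hc0] using hasDerivAt_iff_isLittleO.mp hc
  exact (Asymptotics.IsBigO.of_bound K hbound).trans_isLittleO hderiv

theorem limsup_slope_lt_zero_of_descent_curve {f : E → ℝ} {K : NNReal} {s : Set E}
    {x v : E} {c : ℝ → E} {δ : ℝ} (hs : s ∈ 𝓝 x) (hf : LipschitzOnWith K f s)
    (hc : HasDerivAt c v 0) (hc0 : c 0 = x) (hδ : 0 < δ)
    (hdesc : ∀ᶠ t in 𝓝[>] 0, f (c t) ≤ f x - t * δ) :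
    limsup (fun t : ℝ => (((f (x + t • v) - f x) / t : ℝ) : EReal)) (𝓝[>] 0) < 0 := by
  have hclose := (isLittleO_apply_add_smul_sub_apply hs hf hc hc0).def (half_pos hδ)
  have hslope : ∀ᶠ t in 𝓝[>] (0 : ℝ), (f (x + t • v) - f x) / t ≤ -(δ / 2) := by
    filter_upwards [hdesc, nhdsWithin_le_nhds hclose, self_mem_nhdsWithin]
      with t hdesc_t hclose_t (ht : 0 < t)
    rw [Real.norm_of_nonneg ht.le] at hclose_t
    rw [div_le_iff₀ ht]
    linarith [le_abs_self (f (x + t • v) - f (c t)), Real.norm_eq_abs (f (x + t • v) - f (c t))]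
  calc limsup (fun t : ℝ => (((f (x + t • v) - f x) / t : ℝ) : EReal)) (𝓝[>] 0)
      ≤ ((-(δ / 2) : ℝ) : EReal) :=
        limsup_le_of_le (by isBoundedDefault) (hslope.mono fun t ht => EReal.coe_le_coe ht)
    _ < 0 := EReal.coe_lt_coe_iff.mpr (by linarith)

end Descent

theorem exists_lipschitzOnWith_mem_nhds_of_isOpen {X : Type*} [PseudoMetricSpace X] {D : Set X}
    {f : X → ℝ} (hD : IsOpen D)
    (hf : ∀ x ∈ D, ∃ (K : NNReal) (ε : ℝ), 0 < ε ∧ LipschitzOnWith K f (Metric.ball x ε ∩ D))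
    {x : X} (hx : x ∈ D) : ∃ (K : NNReal), ∃ s ∈ 𝓝 x, LipschitzOnWith K f s := by
  obtain ⟨K, ε, hε, hlip⟩ := hf x hx
  exact ⟨K, _, inter_mem (Metric.ball_mem_nhds x hε) (hD.mem_nhds hx), hlip⟩

namespace ECL

variable {d dξ d₁ d₂ : ℕ} {D : Set (Fin d → ℝ)} {f : (Fin d → ℝ) → ℝ}

theorem apply_le_of_mem_L (E : ECL d dξ d₁ d₂ D f) {y : Fin d → ℝ} {γ : ℝ} {ξ : Fin dξ → ℝ}
    (hy : ContinuousAt f y) (h : (y, γ, ξ) ∈ E.L) : f y ≤ γ :=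
  ContinuousWithinAt.closure_le (E.proj_upper y γ ξ h)
    (ContinuousAt.comp (g := f) hy continuousAt_fst).continuousWithinAt
    continuousAt_snd.continuousWithinAt fun _ hq => hq.2

theorem exists_path_of_mem (E : ECL d dξ d₁ d₂ D f) {p₀ p₁ : (Fin d → ℝ) × ℝ × (Fin dξ → ℝ)}
    (h₀ : p₀ ∈ E.L) (h₁ : p₁ ∈ E.L) :
    ∃ c : ℝ → (Fin d → ℝ) × ℝ × (Fin dξ → ℝ), c 0 = p₀ ∧ DifferentiableAt ℝ c 0 ∧
      ∀ s ∈ Icc (0 : ℝ) 1, c s ∈ E.L ∧ (c s).2.1 = p₀.2.1 + s * (p₁.2.1 - p₀.2.1) := by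
  obtain ⟨U, Ψ, hU, hFGU, hΨ, hΨΦ⟩ := E.inv_C2
  set a := E.Φ p₀
  set b := E.Φ p₁
  have ha : a ∈ E.F ×ˢ E.G := E.maps_Φ p₀ h₀
  have hb : b ∈ E.F ×ˢ E.G := E.maps_Φ p₁ h₁
  set q : ℝ → (ℝ × (Fin d₁ → ℝ)) × (Fin d₂ → ℝ) := fun s => (a.1 + s • (b.1 - a.1), a.2)
  have hq0 : q 0 = a := by simp [q]
  have hqFG : ∀ s ∈ Icc (0 : ℝ) 1, q s ∈ E.F ×ˢ E.G := fun s hs =>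
    ⟨E.convex_F.add_smul_sub_mem ha.1 hb.1 hs, ha.2⟩
  have hΨq : ∀ s ∈ Icc (0 : ℝ) 1, Ψ (q s) ∈ E.L ∧ E.Φ (Ψ (q s)) = q s := fun s hs => by
    obtain ⟨p, hp, hpq⟩ := E.surjOn_Φ (hqFG s hs)
    rw [← hpq, hΨΦ p hp]
    exact ⟨hp, rfl⟩
  have hΨa : DifferentiableAt ℝ Ψ (q 0) :=
    hq0 ▸ (hΨ.differentiableOn two_ne_zero).differentiableAt (hU.mem_nhds (hFGU ha))
  have hq : DifferentiableAt ℝ q 0 := by fun_prop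
  refine ⟨Ψ ∘ q, by simp [hq0, a, hΨΦ p₀ h₀], hΨa.comp 0 hq, fun s hs => ⟨(hΨq s hs).1, ?_⟩⟩
  calc (Ψ (q s)).2.1 = (E.Φ (Ψ (q s))).1.1 := (E.fst_Φ _ (hΨq s hs).1).symm
    _ = a.1.1 + s * (b.1.1 - a.1.1) := by simp [(hΨq s hs).2, q]
    _ = p₀.2.1 + s * (p₁.2.1 - p₀.2.1) := by rw [E.fst_Φ p₀ h₀, E.fst_Φ p₁ h₁]

end ECL

/-- **ECL descent direction on open domains** (Lemma 3.1, part 1): if `D` is open,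
`f : D → ℝ` is locally Lipschitz and admits an ECL, and `x ∈ D` is non-degenerate
but not a global minimizer of `f` on `D`, then there is a nonzero direction `v`
along which the one-sided limsup difference quotient of `f` at `x` is negative. -/
theorem ecl_descent_direction_open {d dξ d₁ d₂ : ℕ} {D : Set (Fin d → ℝ)}
    {f : (Fin d → ℝ) → ℝ} (hD : IsOpen D)
    (hf : ∀ x ∈ D, ∃ (K : NNReal) (ε : ℝ), 0 < ε ∧
      LipschitzOnWith K f (Metric.ball x ε ∩ D))
    (E : ECL d dξ d₁ d₂ D f)
    {x : Fin d → ℝ} (hx : x ∈ D)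
    (hnd : ∃ ξ, (x, f x, ξ) ∈ E.L)
    (hnotmin : ∃ x' ∈ D, f x' < f x) :
    ∃ v : Fin d → ℝ, v ≠ 0 ∧
      Filter.limsup (fun t : ℝ => (((f (x + t • v) - f x) / t : ℝ) : EReal))
        (𝓝[>] (0 : ℝ)) < 0 := by
  obtain ⟨ξ₀, h₀⟩ := hnd
  obtain ⟨x', hx'D, hx'⟩ := hnotmin
  obtain ⟨ξ₁, h₁⟩ := E.proj_lower x' hx'D ((f x' + f x) / 2) (by linarith)
  obtain ⟨c, hc0, hcd, hcL⟩ := E.exists_path_of_mem h₀ h₁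
  have hcont : ∀ y ∈ D, ContinuousAt f y := fun y hy => by
    obtain ⟨K, s, hs, hlip⟩ := exists_lipschitzOnWith_mem_nhds_of_isOpen hD hf hy
    exact hlip.continuousOn.continuousAt hs
  have hcx : HasDerivAt (fun t => (c t).1) (deriv c 0).1 0 := hcd.hasDerivAt.fst
  have hdesc : ∀ᶠ t in 𝓝[>] 0, f (c t).1 ≤ f x - t * ((f x - f x') / 2) := by
    have hcD : ∀ᶠ t in 𝓝 0, (c t).1 ∈ D := hcx.continuousAt (hD.mem_nhds (by simpa [hc0]))
    filter_upwards [Ioo_mem_nhdsGT one_pos, nhdsWithin_le_nhds hcD] with t ht htD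
    obtain ⟨hL, hlevel⟩ := hcL t (Ioo_subset_Icc_self ht)
    have hle := E.apply_le_of_mem_L (hcont _ htD) hL
    rw [hlevel] at hle
    linarith
  obtain ⟨K, s, hs, hlip⟩ := exists_lipschitzOnWith_mem_nhds_of_isOpen hD hf hx
  have hlim := limsup_slope_lt_zero_of_descent_curve hs hlip hcx (by simp [hc0])
    (by linarith : 0 < (f x - f x') / 2) hdesc
  refine ⟨_, fun hv => ?_, hlim⟩
  simp [hv] at hlim
end

section
/- Let D ⊆ ℝ^d be closed, let f : D → ℝ be locally Lipschitz continuous, and suppose f admits an ECL (L, F, G, Φ). If x ∈ D is non-degenerate and is not a global minimizer of f on D, then there exist δ > 0 and a curve φ : [0,δ) → ℝ^d that is C² on [0,δ), satisfies φ(0) = x and φ(t) ∈ D for all t ∈ [0,δ), has nonzero one-sided derivative φ'(0) ≠ 0, and satisfies limsup_{t → 0⁺} (f(φ(t)) − f(x))/t < 0. -/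
open Set Filter Topology

lemma closure_epigraph_le {d : ℕ} {D : Set (Fin d → ℝ)} {f : (Fin d → ℝ) → ℝ}
    (hf : ∀ x ∈ D, ∃ (K : NNReal) (ε : ℝ), 0 < ε ∧
      LipschitzOnWith K f (Metric.ball x ε ∩ D))
    {y : Fin d → ℝ} {c : ℝ} (hyD : y ∈ D)
    (h : (y, c) ∈ closure {q : (Fin d → ℝ) × ℝ | q.1 ∈ D ∧ f q.1 ≤ q.2}) :
    f y ≤ c := by
  obtain ⟨K, ε₀, hε₀, hK⟩ := hf y hyD
  by_contra hlt
  push_neg at hlt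
  set ε : ℝ := min ε₀ ((f y - c) / (2 * ((K : ℝ) + 1))) with hε
  have hKpos : (0:ℝ) < (K : ℝ) + 1 := by positivity
  have hεpos : 0 < ε := lt_min hε₀ (div_pos (by linarith) (by positivity))
  obtain ⟨⟨z, c'⟩, ⟨hzD, hzf⟩, hdist⟩ := Metric.mem_closure_iff.mp h ε hεpos
  rw [Prod.dist_eq] at hdist
  have hd1 : dist y z < ε := lt_of_le_of_lt (le_max_left _ _) hdist
  have hd2 : dist c c' < ε := lt_of_le_of_lt (le_max_right _ _) hdist
  have hzball : z ∈ Metric.ball y ε₀ ∩ D :=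
    ⟨by simpa [Metric.mem_ball, dist_comm] using lt_of_lt_of_le hd1 (min_le_left _ _), hzD⟩
  have hyball : y ∈ Metric.ball y ε₀ ∩ D := ⟨Metric.mem_ball_self hε₀, hyD⟩
  have hlip : dist (f y) (f z) ≤ (K : ℝ) * dist y z := hK.dist_le_mul y hyball z hzball
  have h1 : f y - f z ≤ (K : ℝ) * dist y z := by
    calc f y - f z ≤ dist (f y) (f z) := by rw [Real.dist_eq]; exact le_abs_self _
    _ ≤ _ := hlip
  have h2 : c' - c ≤ ε := by
    calc c' - c ≤ dist c c' := by rw [Real.dist_eq, abs_sub_comm]; exact le_abs_self _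
    _ ≤ ε := hd2.le
  have hεle : ε ≤ (f y - c) / (2 * ((K : ℝ) + 1)) := min_le_right _ _
  have hdle : dist y z ≤ ε := hd1.le
  have hK0 : (0:ℝ) ≤ (K : ℝ) := K.2
  simp only [Set.mem_setOf_eq] at hzf
  have hmul : ((K:ℝ)+1) * ε ≤ ((K:ℝ)+1) * ((f y - c) / (2 * ((K : ℝ) + 1))) :=
    mul_le_mul_of_nonneg_left hεle (by linarith)
  have heq : ((K:ℝ)+1) * ((f y - c) / (2 * ((K : ℝ) + 1))) = (f y - c)/2 := by
    field_simp
  have hKd : (K:ℝ) * dist y z ≤ (K:ℝ) * ε := mul_le_mul_of_nonneg_left hdle hK0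
  linarith


/-- **ECL descent curve on closed domains** (Lemma 3.1, part 2): if `D` is closed,
`f : D → ℝ` is locally Lipschitz and admits an ECL, and `x ∈ D` is non-degenerate
but not a global minimizer of `f` on `D`, then there is a `C²` curve
`φ : [0,δ) → D` starting at `x` with nonzero one-sided derivative at `0`
along which the one-sided limsup difference quotient of `f` at `x` is negative. -/
theorem ecl_descent_curve_closed {d dξ d₁ d₂ : ℕ} {D : Set (Fin d → ℝ)}
    {f : (Fin d → ℝ) → ℝ} (hD : IsClosed D)
    (hf : ∀ x ∈ D, ∃ (K : NNReal) (ε : ℝ), 0 < ε ∧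
      LipschitzOnWith K f (Metric.ball x ε ∩ D))
    (E : ECL d dξ d₁ d₂ D f)
    {x : Fin d → ℝ} (hx : x ∈ D)
    (hnd : ∃ ξ, (x, f x, ξ) ∈ E.L)
    (hnotmin : ∃ x' ∈ D, f x' < f x) :
    ∃ δ : ℝ, 0 < δ ∧ ∃ φ : ℝ → (Fin d → ℝ),
      ContDiffOn ℝ 2 φ (Set.Ico 0 δ) ∧
      φ 0 = x ∧
      (∀ t ∈ Set.Ico (0 : ℝ) δ, φ t ∈ D) ∧
      (∃ v : Fin d → ℝ, v ≠ 0 ∧ HasDerivWithinAt φ v (Set.Ico 0 δ) 0) ∧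
      Filter.limsup (fun t : ℝ => (((f (φ t) - f x) / t : ℝ) : EReal))
        (𝓝[>] (0 : ℝ)) < 0 := by
  classical
  obtain ⟨ξ₀, hξ₀⟩ := hnd
  obtain ⟨x', hx'D, hx'f⟩ := hnotmin
  set γ' : ℝ := (f x' + f x) / 2 with hγ'
  have hγ'1 : f x' < γ' := by rw [hγ']; linarith
  have hγ'2 : γ' < f x := by rw [hγ']; linarith
  obtain ⟨ξ', hξ'⟩ := E.proj_lower x' hx'D γ' hγ'1
  set a := E.Φ (x, f x, ξ₀) with ha
  set b := E.Φ (x', γ', ξ') with hb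
  have haFG : a ∈ E.F ×ˢ E.G := E.maps_Φ _ hξ₀
  have hbFG : b ∈ E.F ×ˢ E.G := E.maps_Φ _ hξ'
  have ha1 : a.1.1 = f x := E.fst_Φ _ hξ₀
  have hb1 : b.1.1 = γ' := E.fst_Φ _ hξ'
  obtain ⟨U, Ψ, hUopen, hFGU, hΨC2, hΨΦ⟩ := E.inv_C2
  set q : ℝ → ℝ × (Fin d₁ → ℝ) := fun t => (1 - t) • a.1 + t • b.1 with hq
  set φ : ℝ → (Fin d → ℝ) := fun t => (Ψ (q t, a.2)).1 with hφ
  -- membership of curve in F ×ˢ G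
  have hqF : ∀ t ∈ Icc (0:ℝ) 1, (q t, a.2) ∈ E.F ×ˢ E.G := by
    intro t ht
    exact ⟨E.convex_F haFG.1 hbFG.1 (by linarith [ht.2]) ht.1 (by ring), haFG.2⟩
  -- key pointwise facts
  have hkey : ∀ t ∈ Icc (0:ℝ) 1, (φ t, (1-t) * f x + t * γ', (Ψ (q t, a.2)).2.2) ∈ E.L := by
    intro t ht
    obtain ⟨p, hpL, hΦp⟩ := E.surjOn_Φ (hqF t ht)
    have hΨp : Ψ (q t, a.2) = p := by rw [← hΦp, hΨΦ p hpL]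
    have hγ : p.2.1 = (1-t) * f x + t * γ' := by
      have := E.fst_Φ p hpL
      rw [hΦp] at this
      simp only [hq] at this
      rw [← this]
      simp [Prod.fst_add, Prod.smul_fst, ha1, hb1, smul_eq_mul]
    have : p = (φ t, (1-t) * f x + t * γ', (Ψ (q t, a.2)).2.2) := by
      rw [hφ]; simp only [hΨp, ← hγ]
    rw [← this]; exact hpL
  have hmemD : ∀ t ∈ Icc (0:ℝ) 1, φ t ∈ D ∧ f (φ t) ≤ (1-t) * f x + t * γ' := by
    intro t ht
    have hcl := E.proj_upper _ _ _ (hkey t ht)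
    have hφD : φ t ∈ D := by
      have hsub : closure {q : (Fin d → ℝ) × ℝ | q.1 ∈ D ∧ f q.1 ≤ q.2} ⊆ D ×ˢ (univ : Set ℝ) := by
        apply closure_minimal _ (hD.prod isClosed_univ)
        intro p hp; exact ⟨hp.1, trivial⟩
      exact (hsub hcl).1
    exact ⟨hφD, closure_epigraph_le hf hφD hcl⟩
  -- smoothness on Icc 0 1
  have hqC : ContDiff ℝ 2 (fun t : ℝ => (q t, a.2)) := by
    apply ContDiff.prodMk _ contDiff_const
    exact ((contDiff_const.sub contDiff_id).smul contDiff_const).add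
      (contDiff_id.smul contDiff_const)
  have hφC : ContDiffOn ℝ 2 φ (Icc 0 1) := by
    have : ContDiffOn ℝ 2 (fun t : ℝ => Ψ (q t, a.2)) (Icc 0 1) := by
      apply hΨC2.comp (hqC.contDiffOn)
      intro t ht
      exact hFGU (hqF t ht)
    exact this.fst
  have hφ0 : φ 0 = x := by
    have hq0 : q 0 = a.1 := by simp [hq]
    have : Ψ (q 0, a.2) = (x, f x, ξ₀) := by
      rw [hq0]
      have : (a.1, a.2) = a := rfl
      rw [this, ha, hΨΦ _ hξ₀]
    rw [hφ]; simp only [this]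
  -- Lipschitz data at x
  obtain ⟨K₀, ε₀, hε₀, hK₀⟩ := hf x hx
  -- choose δ via continuity
  have hcont : ContinuousWithinAt φ (Icc 0 1) 0 :=
    (hφC.continuousOn) 0 ⟨le_refl 0, zero_le_one⟩
  obtain ⟨δ', hδ', hδ'prop⟩ := Metric.continuousWithinAt_iff.mp hcont ε₀ hε₀
  set δ : ℝ := min δ' 1 with hδdef
  have hδpos : 0 < δ := lt_min hδ' one_pos
  have hδle1 : δ ≤ 1 := min_le_right _ _
  have hIcoIcc : Ico (0:ℝ) δ ⊆ Icc 0 1 := fun t ht => ⟨ht.1, le_of_lt (lt_of_lt_of_le ht.2 hδle1)⟩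
  have hball : ∀ t ∈ Ico (0:ℝ) δ, φ t ∈ Metric.ball x ε₀ ∩ D := by
    intro t ht
    refine ⟨?_, (hmemD t (hIcoIcc ht)).1⟩
    have := hδ'prop (hIcoIcc ht) (by
      rw [Real.dist_eq, sub_zero, abs_of_nonneg ht.1]
      exact lt_of_lt_of_le ht.2 (min_le_left _ _))
    rw [hφ0] at this
    exact this
  set c : ℝ := f x - γ' with hc
  have hcpos : 0 < c := by rw [hc]; linarith
  have hfle : ∀ t ∈ Ico (0:ℝ) δ, f (φ t) ≤ f x - t * c := by
    intro t ht
    have := (hmemD t (hIcoIcc ht)).2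
    rw [hc]; linarith [this]
  -- lower bound on displacement
  have hdisp : ∀ t ∈ Ico (0:ℝ) δ, c * t ≤ ((K₀:ℝ) + 1) * ‖φ t - x‖ := by
    intro t ht
    have hlip : dist (f x) (f (φ t)) ≤ (K₀:ℝ) * dist x (φ t) :=
      hK₀.dist_le_mul x ⟨Metric.mem_ball_self hε₀, hx⟩ (φ t) (hball t ht)
    have h1 : f x - f (φ t) ≤ (K₀:ℝ) * dist x (φ t) := by
      calc f x - f (φ t) ≤ dist (f x) (f (φ t)) := by
            rw [Real.dist_eq]; exact le_abs_self _
      _ ≤ _ := hlip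
    have h2 : f (φ t) ≤ f x - t * c := hfle t ht
    have hdn : dist x (φ t) = ‖φ t - x‖ := by rw [dist_comm, dist_eq_norm]
    have hK0nn : (0:ℝ) ≤ (K₀:ℝ) := K₀.2
    nlinarith [norm_nonneg (φ t - x)]
  -- the derivative
  have hφCδ : ContDiffOn ℝ 2 φ (Ico 0 δ) := hφC.mono hIcoIcc
  have h0mem : (0:ℝ) ∈ Ico (0:ℝ) δ := ⟨le_refl 0, hδpos⟩
  have hdiff : DifferentiableWithinAt ℝ φ (Ico 0 δ) 0 :=
    (hφCδ.differentiableOn (by norm_num)) 0 h0mem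
  set v := derivWithin φ (Ico 0 δ) 0 with hv
  have hhd : HasDerivWithinAt φ v (Ico 0 δ) 0 := hdiff.hasDerivWithinAt
  refine ⟨δ, hδpos, φ, hφCδ, hφ0, fun t ht => (hmemD t (hIcoIcc ht)).1, ⟨v, ?_, hhd⟩, ?_⟩
  · -- v ≠ 0
    intro hv0
    rw [hv0] at hhd
    have hlo := hasDerivWithinAt_iff_isLittleO.mp hhd
    simp only [hφ0, sub_zero, smul_zero, sub_zero] at hlo
    have hbd := hlo.bound (show (0:ℝ) < c / (2 * ((K₀:ℝ) + 1)) by positivity)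
    have hmono : 𝓝[Ioo (0:ℝ) δ] 0 ≤ 𝓝[Ico (0:ℝ) δ] 0 :=
      nhdsWithin_mono _ Ioo_subset_Ico_self
    have hbd' : ∀ᶠ t in 𝓝[Ioo (0:ℝ) δ] 0,
        ‖φ t - x‖ ≤ c / (2 * ((K₀:ℝ) + 1)) * ‖t‖ := hbd.filter_mono hmono
    have hne : (𝓝[Ioo (0:ℝ) δ] 0).NeBot := by
      rw [nhdsWithin_Ioo_eq_nhdsGT hδpos]
      infer_instance
    obtain ⟨t, htb, htm⟩ := (hbd'.and (eventually_mem_nhdsWithin)).exists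
    have htIco : t ∈ Ico (0:ℝ) δ := ⟨htm.1.le, htm.2⟩
    have hd := hdisp t htIco
    have htpos : 0 < t := htm.1
    rw [Real.norm_eq_abs, abs_of_pos htpos] at htb
    have hK1 : (0:ℝ) < (K₀:ℝ) + 1 := by positivity
    have : ((K₀:ℝ)+1) * ‖φ t - x‖ ≤ ((K₀:ℝ)+1) * (c / (2 * ((K₀:ℝ) + 1)) * t) :=
      mul_le_mul_of_nonneg_left htb (by positivity)
    have heq : ((K₀:ℝ)+1) * (c / (2 * ((K₀:ℝ) + 1)) * t) = c * t / 2 := by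
      field_simp
    nlinarith
  · -- limsup
    have hev : ∀ᶠ t in 𝓝[>] (0:ℝ),
        (((f (φ t) - f x) / t : ℝ) : EReal) ≤ ((-c : ℝ) : EReal) := by
      filter_upwards [Ioo_mem_nhdsGT_of_mem (show (0:ℝ) ∈ Ico 0 δ from h0mem)] with t ht
      rw [EReal.coe_le_coe_iff]
      have h2 : f (φ t) ≤ f x - t * c := hfle t ⟨ht.1.le, ht.2⟩
      rw [div_le_iff₀ ht.1]
      nlinarith [ht.1]
    have hls : Filter.limsup (fun t : ℝ => (((f (φ t) - f x) / t : ℝ) : EReal))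
        (𝓝[>] (0:ℝ)) ≤ ((-c : ℝ) : EReal) := Filter.limsup_le_of_le (by isBoundedDefault) hev
    refine lt_of_le_of_lt hls ?_
    rw [show ((0:EReal)) = ((0:ℝ):EReal) from rfl, EReal.coe_lt_coe_iff]
    linarith
end

section
/- Let D ⊆ ℝ^d be open, let f : D → ℝ be locally Lipschitz continuous, and suppose f admits an ECL (L, F, G, Φ). If x* ∈ D is non-degenerate and f is (Fréchet) differentiable at x* with derivative zero, then x* is a global minimizer of f on D, i.e., f(x*) ≤ f(x) for all x ∈ D. -/
/-!
Suppose `f x < f x*` for some `x ∈ D` and pick `f x < γ < f x*`. Lift `(x*, f x*)` and `(x, γ)`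
to `L`, map them by `Φ` into `F × G`, join their `F`-components by a segment (keeping the
`G`-component fixed) and pull it back by the `C²` inverse of `Φ`. Since `Φ` preserves the
`γ`-coordinate, this gives a curve in `L`, differentiable at `0`, whose `γ`-coordinate moves
affinely from `f x*` to `γ`. As `f` is continuous, the points of `π_{x,γ}(L)` over `D` lie in
`epi_≥(f)`, so along the curve `f` decreases at rate at least `f x* - γ > 0`, contradicting
`Df(x*) = 0`.
-/

open Set Filter Topology

theorem LowerSemicontinuousWithinAt.le_of_mem_closure_epigraph {α γ : Type*}
    [TopologicalSpace α] [LinearOrder γ] [TopologicalSpace γ] [OrderTopology γ]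
    {f : α → γ} {s : Set α} {x : α} {y : γ} (hf : LowerSemicontinuousWithinAt f s x)
    (h : (x, y) ∈ closure {p : α × γ | p.1 ∈ s ∧ f p.1 ≤ p.2}) : f x ≤ y := by
  by_contra! hy
  obtain ⟨y', hyy', z, hzx, hdisj⟩ := hy.exists_disjoint_Iio_Ioi
  have hnear : ∀ᶠ p : α × γ in 𝓝 (x, y), (p.1 ∈ s → z < f p.1) ∧ p.2 < y' :=
    (eventually_nhdsWithin_iff.mp (hf z hzx)).prodMk_nhds (gt_mem_nhds hyy')
  obtain ⟨p, ⟨hps, hfp⟩, hzp, hpy'⟩ :=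
    (mem_closure_iff_frequently.mp h).and_eventually hnear |>.exists
  exact (hdisj _ hpy' _ (hzp hps)).not_ge hfp

theorem HasDerivAt.le_of_eventually_le_add_mul {g : ℝ → ℝ} {a g' m : ℝ} (hg : HasDerivAt g g' a)
    (h : ∀ᶠ t in 𝓝[>] a, g t ≤ g a + m * (t - a)) : g' ≤ m := by
  have hslope : Tendsto (slope g a) (𝓝[>] a) (𝓝 g') :=
    (hasDerivWithinAt_iff_tendsto_slope' (lt_irrefl a)).mp hg.hasDerivWithinAt
  refine le_of_tendsto hslope ?_
  filter_upwards [h, self_mem_nhdsWithin] with t ht (hat : a < t)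
  rw [slope_def_field, div_le_iff₀ (sub_pos.mpr hat)]
  linarith

theorem locallyLipschitzOn_of_lipschitzOnWith_ball_inter {α β : Type*} [PseudoMetricSpace α]
    [PseudoMetricSpace β] {f : α → β} {s : Set α}
    (hf : ∀ x ∈ s, ∃ (K : NNReal) (ε : ℝ), 0 < ε ∧ LipschitzOnWith K f (Metric.ball x ε ∩ s)) :
    LocallyLipschitzOn s f := by
  intro x hx
  obtain ⟨K, ε, hε, hK⟩ := hf x hx
  exact ⟨K, _, mem_nhdsWithin_iff_exists_mem_nhds_inter.mpr
    ⟨_, Metric.ball_mem_nhds x hε, subset_rfl⟩, hK⟩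

namespace ECL

variable {d dξ d₁ d₂ : ℕ} {D : Set (Fin d → ℝ)} {f : (Fin d → ℝ) → ℝ} (E : ECL d dξ d₁ d₂ D f)

theorem le_of_mem_L {x : Fin d → ℝ} {γ : ℝ} {ξ : Fin dξ → ℝ}
    (hf : LowerSemicontinuousWithinAt f D x) (h : (x, γ, ξ) ∈ E.L) : f x ≤ γ :=
  hf.le_of_mem_closure_epigraph (E.proj_upper x γ ξ h)

theorem exists_curve_lineMap {p₀ p₁ : (Fin d → ℝ) × ℝ × (Fin dξ → ℝ)} (h₀ : p₀ ∈ E.L)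
    (h₁ : p₁ ∈ E.L) :
    ∃ c : ℝ → (Fin d → ℝ) × ℝ × (Fin dξ → ℝ), c 0 = p₀ ∧ DifferentiableAt ℝ c 0 ∧
      ∀ t ∈ Icc (0 : ℝ) 1, c t ∈ E.L ∧ (c t).2.1 = AffineMap.lineMap p₀.2.1 p₁.2.1 t := by
  obtain ⟨U, Ψ, hU, hFGU, hΨ, hΨΦ⟩ := E.inv_C2
  have hΨ_mem : ∀ q ∈ E.F ×ˢ E.G, Ψ q ∈ E.L ∧ E.Φ (Ψ q) = q := by
    intro q hq
    obtain ⟨p, hp, rfl⟩ := E.surjOn_Φ hq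
    rw [hΨΦ p hp]
    exact ⟨hp, rfl⟩
  obtain ⟨hq₀F, hq₀G⟩ := E.maps_Φ p₀ h₀
  have hq₁F := (E.maps_Φ p₁ h₁).1
  set s : ℝ → (ℝ × (Fin d₁ → ℝ)) × (Fin d₂ → ℝ) :=
    fun t ↦ (AffineMap.lineMap (E.Φ p₀).1 (E.Φ p₁).1 t, (E.Φ p₀).2)
  have hs : ∀ t ∈ Icc (0 : ℝ) 1, s t ∈ E.F ×ˢ E.G :=
    fun t ht ↦ ⟨E.convex_F.lineMap_mem hq₀F hq₁F ht, hq₀G⟩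
  have hs₀ : s 0 = E.Φ p₀ := by simp [s]
  refine ⟨Ψ ∘ s, by simp [hs₀, hΨΦ p₀ h₀], ?_, fun t ht ↦ ⟨(hΨ_mem _ (hs t ht)).1, ?_⟩⟩
  · have hΨ₀ : DifferentiableAt ℝ Ψ (s 0) :=
      (hΨ.contDiffAt (hU.mem_nhds (hFGU (hs₀ ▸ E.maps_Φ p₀ h₀)))).differentiableAt
        (by norm_num)
    exact hΨ₀.comp 0 (by simp only [s, AffineMap.lineMap_apply_module]; fun_prop)
  · obtain ⟨hL, hΦ⟩ := hΨ_mem _ (hs t ht)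
    rw [Function.comp_apply, ← E.fst_Φ _ hL, hΦ, ← E.fst_Φ p₀ h₀, ← E.fst_Φ p₁ h₁]
    exact AffineMap.fst_lineMap _ _ _

end ECL

/-- **ECL global optimality of non-degenerate stationary points** (Theorem 3.2,
specialized to differentiable costs): if `D` is open, `f : D → ℝ` is locally
Lipschitz and admits an ECL, and `x* ∈ D` is non-degenerate and differentiable
at `x*` with zero derivative, then `x*` is a global minimizer of `f` on `D`. -/
theorem ecl_stationary_global_min {d dξ d₁ d₂ : ℕ} {D : Set (Fin d → ℝ)}
    {f : (Fin d → ℝ) → ℝ} (hD : IsOpen D)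
    (hf : ∀ x ∈ D, ∃ (K : NNReal) (ε : ℝ), 0 < ε ∧
      LipschitzOnWith K f (Metric.ball x ε ∩ D))
    (E : ECL d dξ d₁ d₂ D f)
    {xs : Fin d → ℝ} (hxs : xs ∈ D)
    (hnd : ∃ ξ, (xs, f xs, ξ) ∈ E.L)
    (hderiv : HasFDerivAt f (0 : (Fin d → ℝ) →L[ℝ] ℝ) xs) :
    ∀ x ∈ D, f xs ≤ f x := by
  intro x hx
  by_contra! hlt
  obtain ⟨γ, hxγ, hγxs⟩ := exists_between hlt
  obtain ⟨ξs, hξs⟩ := hnd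
  obtain ⟨ξ, hξ⟩ := E.proj_lower x hx γ hxγ
  obtain ⟨c, hc₀, hcd, hcL⟩ := E.exists_curve_lineMap hξs hξ
  have hcont : ContinuousOn f D :=
    (locallyLipschitzOn_of_lipschitzOnWith_ball_inter hf).continuousOn
  have hcD : ∀ᶠ t in 𝓝 (0 : ℝ), (c t).1 ∈ D :=
    hcd.continuousAt.fst.preimage_mem_nhds (hD.mem_nhds (by simpa [hc₀] using hxs))
  have hbelow : ∀ᶠ t in 𝓝[>] (0 : ℝ), f (c t).1 ≤ f (c 0).1 + (γ - f xs) * (t - 0) := by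
    filter_upwards [Ioc_mem_nhdsGT zero_lt_one, nhdsWithin_le_nhds hcD] with t ht htD
    obtain ⟨hctL, hctγ⟩ := hcL t (Ioc_subset_Icc_self ht)
    have hle := E.le_of_mem_L (hcont _ htD).lowerSemicontinuousWithinAt hctL
    rw [hctγ, AffineMap.lineMap_apply_ring'] at hle
    simp only [hc₀, sub_zero]
    linarith
  have hslope : HasDerivAt (fun t ↦ f (c t).1) 0 0 := by
    exact (hc₀ ▸ hderiv : HasFDerivAt f 0 (c 0).1).comp_hasDerivAt 0 hcd.hasDerivAt.fst
  linarith [hslope.le_of_eventually_le_add_mul hbelow]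
end

section
/- Let E, F, H be finite-dimensional real normed vector spaces, let C ⊆ F be a convex set, let F₀ ⊆ E be a convex set, let h : E → F be an affine map with h⁻¹(interior C) ∩ F₀ nonempty, let G be an arbitrary index set (or type), and let Ψ : E × G → H be a map such that for every z ∈ G the map y ↦ Ψ(y,z) is continuous on F₀. Then Ψ((h⁻¹(C) ∩ F₀) × G) ⊆ closure( Ψ((h⁻¹(interior C) ∩ F₀) × G) ). -/
open Set Filter Topology

/-- **Key topological lemma for ECL inclusions** (Lemma D.4): let `C` be convex,
`F₀` convex, `h` affine with `h⁻¹(interior C) ∩ F₀` nonempty, and `Ψ(·, z)`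
continuous on `F₀` for every `z`. Then the image of `(h⁻¹(C) ∩ F₀) × G` under `Ψ`
is contained in the closure of the image of `(h⁻¹(interior C) ∩ F₀) × G`. -/
theorem image_preimage_subset_closure_interior
    {E F H : Type*}
    [NormedAddCommGroup E] [NormedSpace ℝ E] [FiniteDimensional ℝ E]
    [NormedAddCommGroup F] [NormedSpace ℝ F] [FiniteDimensional ℝ F]
    [NormedAddCommGroup H] [NormedSpace ℝ H] [FiniteDimensional ℝ H]
    {C : Set F} (hC : Convex ℝ C) {F₀ : Set E} (hF₀ : Convex ℝ F₀)
    (h : E →ᵃ[ℝ] F) (hne : (h ⁻¹' (interior C) ∩ F₀).Nonempty)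
    {G : Type*} (Ψ : E × G → H)
    (hΨ : ∀ z : G, ContinuousOn (fun y => Ψ (y, z)) F₀) :
    Ψ '' ((h ⁻¹' C ∩ F₀) ×ˢ (Set.univ : Set G)) ⊆
      closure (Ψ '' ((h ⁻¹' (interior C) ∩ F₀) ×ˢ (Set.univ : Set G))) := by
  obtain ⟨y₀, hy₀C, hy₀F⟩ := hne
  rintro _ ⟨⟨y, z⟩, ⟨⟨hyC, hyF⟩, -⟩, rfl⟩
  -- sequence of coefficients
  set t : ℕ → ℝ := fun n => 1 / (n + 1) with ht
  have ht0 : ∀ n, 0 < t n := fun n => by positivity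
  have ht1 : ∀ n, t n ≤ 1 := by
    intro n
    rw [ht]
    rw [div_le_one (by positivity)]
    linarith [Nat.cast_nonneg (α := ℝ) n]
  set yseq : ℕ → E := fun n => (1 - t n) • y + t n • y₀ with hyseq
  have hyseqF : ∀ n, yseq n ∈ F₀ := fun n =>
    hF₀ hyF hy₀F (by linarith [ht1 n]) (le_of_lt (ht0 n)) (by ring)
  have hyseqC : ∀ n, h (yseq n) ∈ interior C := by
    intro n
    have : h (yseq n) = t n • h y₀ + (1 - t n) • h y := by
      have := AffineMap.lineMap_apply_module y y₀ (t n)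
      have h2 : yseq n = AffineMap.lineMap y y₀ (t n) := by
        rw [this]
      rw [h2, AffineMap.apply_lineMap, AffineMap.lineMap_apply_module]
      abel
    rw [this]
    exact hC.combo_interior_self_mem_interior hy₀C hyC (ht0 n)
      (by linarith [ht1 n]) (by ring)
  have htend : Tendsto t atTop (𝓝 0) := tendsto_one_div_add_atTop_nhds_zero_nat
  have hys : Tendsto yseq atTop (𝓝 y) := by
    have h1 : Tendsto (fun n => (1 - t n) • y + t n • y₀) atTop
        (𝓝 ((1 - (0:ℝ)) • y + (0:ℝ) • y₀)) := by
      exact ((tendsto_const_nhds.sub htend).smul_const y).add (htend.smul_const y₀)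
    simpa using h1
  have hysW : Tendsto yseq atTop (𝓝[F₀] y) :=
    tendsto_nhdsWithin_of_tendsto_nhds_of_eventually_within _ hys
      (Eventually.of_forall hyseqF)
  have hΨtend : Tendsto (fun n => Ψ (yseq n, z)) atTop (𝓝 (Ψ (y, z))) :=
    (hΨ z y hyF).tendsto.comp hysW
  exact mem_closure_of_tendsto hΨtend
    (Eventually.of_forall fun n => ⟨(yseq n, z), ⟨⟨hyseqC n, hyseqF n⟩, trivial⟩, rfl⟩)
end

section
/- Let D ⊆ ℝ^n be open and let f : D → ℝ be continuous. Suppose that for every boundary point y of D, f(x) tends to +∞ as x → y within D (i.e., f tends to atTop along the filter 𝓝[D] y for every y in the frontier of D). Then the non-strict epigraph epi_≥(f) = {(x,γ) ∈ D×ℝ : γ ≥ f(x)} is a closed subset of ℝ^n × ℝ. -/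
open Set Filter Topology

/-- **Closedness of the non-strict epigraph** (Corollary 3.1, condition 2):
if `D ⊆ ℝ^n` is open, `f` is continuous on `D`, and `f(x) → +∞` as `x`
approaches any boundary point of `D` from within `D`, then the non-strict
epigraph `{(x,γ) : x ∈ D, γ ≥ f(x)}` is a closed subset of `ℝ^n × ℝ`. -/
theorem epigraph_isClosed_of_blowup {n : ℕ} {D : Set (Fin n → ℝ)}
    {f : (Fin n → ℝ) → ℝ} (hD : IsOpen D) (hf : ContinuousOn f D)
    (hblow : ∀ y ∈ frontier D, Tendsto f (𝓝[D] y) atTop) :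
    IsClosed {p : (Fin n → ℝ) × ℝ | p.1 ∈ D ∧ f p.1 ≤ p.2} := by
  set S := {p : (Fin n → ℝ) × ℝ | p.1 ∈ D ∧ f p.1 ≤ p.2} with hS
  refine isClosed_of_closure_subset ?_
  rintro ⟨x, γ⟩ hp
  have hF : (𝓝[S] (x, γ)).NeBot := mem_closure_iff_nhdsWithin_neBot.mp hp
  have hfst : Tendsto Prod.fst (𝓝[S] (x, γ)) (𝓝[D] x) := by
    apply tendsto_nhdsWithin_of_tendsto_nhds_of_eventually_within
    · exact (continuous_fst.tendsto _).mono_left nhdsWithin_le_nhds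
    · exact eventually_nhdsWithin_of_forall fun q hq => hq.1
  have hsnd : Tendsto Prod.snd (𝓝[S] (x, γ)) (𝓝 γ) :=
    (continuous_snd.tendsto _).mono_left nhdsWithin_le_nhds
  have hxcl : x ∈ closure D := by
    have : (𝓝[D] x).NeBot := hfst.neBot
    exact mem_closure_iff_nhdsWithin_neBot.mpr this
  by_cases hx : x ∈ D
  · refine ⟨hx, ?_⟩
    have hfx : Tendsto (fun q : (Fin n → ℝ) × ℝ => f q.1) (𝓝[S] (x, γ)) (𝓝 (f x)) := by
      have hcont : ContinuousAt f x := hf.continuousAt (hD.mem_nhds hx)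
      exact hcont.tendsto.comp (hfst.mono_right nhdsWithin_le_nhds)
    exact le_of_tendsto_of_tendsto hfx hsnd
      (eventually_nhdsWithin_of_forall fun q hq => hq.2)
  · exfalso
    have hfr : x ∈ frontier D := ⟨hxcl, by rwa [hD.interior_eq]⟩
    have hblow' : Tendsto (fun q : (Fin n → ℝ) × ℝ => f q.1) (𝓝[S] (x, γ)) atTop :=
      (hblow x hfr).comp hfst
    have h1 : ∀ᶠ q : (Fin n → ℝ) × ℝ in 𝓝[S] (x, γ), γ + 1 ≤ f q.1 :=
      hblow'.eventually_ge_atTop (γ + 1)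
    have h2 : ∀ᶠ q : (Fin n → ℝ) × ℝ in 𝓝[S] (x, γ), q.2 < γ + 1 :=
      hsnd.eventually (eventually_lt_nhds (by linarith))
    have h3 : ∀ᶠ q : (Fin n → ℝ) × ℝ in 𝓝[S] (x, γ), q ∈ S :=
      eventually_mem_nhdsWithin
    have := (h1.and (h2.and h3)).exists
    obtain ⟨q, hq1, hq2, hq3⟩ := this
    exact absurd (hq3.2.trans_lt hq2) (not_lt.mpr hq1)
end

section
/- Let Q be an n×n real positive semidefinite symmetric matrix and R an m×m real positive definite symmetric matrix. Then the function f(X,Y) = trace(Q·X + X⁻¹·Yᵀ·R·Y) is convex on the convex set {(X,Y) : X is an n×n symmetric positive definite matrix, Y ∈ ℝ^{m×n}} (jointly in (X,Y)). -/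
/-!
Completing the square, `tr(X⁻¹YᵀRY) = 2 tr(ZᵀRY) - tr(ZᵀRZX) + tr(X⁻¹(Y - ZX)ᵀR(Y - ZX))`,
shows that for `X ≻ 0` and `R ⪰ 0` the matrix fractional function `tr(X⁻¹YᵀRY)` is the pointwise
maximum over `Z` of functions that are linear in `(X, Y)`, the maximum being attained at
`Z = YX⁻¹`. A pointwise maximum of convex functions is convex, and `tr(QX)` is linear.
-/

open Matrix
open scoped ComplexOrder

theorem convexOn_of_isGreatest {𝕜 E β ι : Type*} [Semiring 𝕜] [PartialOrder 𝕜]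
    [AddCommMonoid E] [SMul 𝕜 E] [AddCommMonoid β] [PartialOrder β] [IsOrderedAddMonoid β]
    [SMul 𝕜 β] [PosSMulMono 𝕜 β] {s : Set E} {f : E → β} {g : ι → E → β}
    (hs : Convex 𝕜 s) (hg : ∀ i, ConvexOn 𝕜 s (g i))
    (hf : ∀ x ∈ s, IsGreatest (Set.range fun i => g i x) (f x)) : ConvexOn 𝕜 s f := by
  refine ⟨hs, fun x hx y hy a b ha hb hab => ?_⟩
  obtain ⟨⟨i, hi⟩, -⟩ := hf _ (hs hx hy ha hb hab)
  have hle : ∀ z ∈ s, g i z ≤ f z := fun z hz => (hf z hz).2 ⟨i, rfl⟩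
  calc f (a • x + b • y) = g i (a • x + b • y) := hi.symm
    _ ≤ a • g i x + b • g i y := (hg i).2 hx hy ha hb hab
    _ ≤ a • f x + b • f y := add_le_add (smul_le_smul_of_nonneg_left (hle x hx) ha)
          (smul_le_smul_of_nonneg_left (hle y hy) hb)

namespace Matrix

section RCLike

variable {n 𝕜 : Type*} [RCLike 𝕜]

open scoped MatrixOrder in
theorem PosSemidef.trace_mul_nonneg [Fintype n] {A B : Matrix n n 𝕜} (hA : A.PosSemidef)
    (hB : B.PosSemidef) : 0 ≤ (A * B).trace := by
  classical
  have hS : (CFC.sqrt A)ᴴ = CFC.sqrt A := (CFC.sqrt_nonneg A).posSemidef.isHermitian.eq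
  calc 0 ≤ (CFC.sqrt A * B * (CFC.sqrt A)ᴴ).trace :=
        (hB.mul_mul_conjTranspose_same _).trace_nonneg
    _ = (A * B).trace := by rw [hS, trace_mul_cycle, CFC.sqrt_mul_sqrt_self A hA.nonneg]

theorem convex_setOf_posDef : Convex ℝ {A : Matrix n n 𝕜 | A.PosDef} := by
  intro A hA B hB a b ha hb hab
  rcases ha.eq_or_lt with rfl | ha
  · simp_all
  · exact (hA.smul ha).add_posSemidef (hB.posSemidef.smul hb)

end RCLike

variable {m n : Type*} [Fintype m] [Fintype n] [DecidableEq n]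

theorem trace_inv_mul_transpose_mul_mul_eq {X : Matrix n n ℝ} (hX : X.IsSymm)
    (hXdet : IsUnit X.det) {R : Matrix m m ℝ} (hR : R.IsSymm) (Y Z : Matrix m n ℝ) :
    (X⁻¹ * Yᵀ * R * Y).trace = 2 * (Zᵀ * R * Y).trace - (Zᵀ * R * Z * X).trace
      + (X⁻¹ * (Y - Z * X)ᵀ * R * (Y - Z * X)).trace := by
  have hcross : (X⁻¹ * (Yᵀ * R * Z * X)).trace = (Zᵀ * R * Y).trace := by
    rw [trace_mul_comm, mul_nonsing_inv_cancel_right _ _ hXdet, ← trace_transpose]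
    simp only [transpose_mul, hR.eq, transpose_transpose, Matrix.mul_assoc]
  simp only [transpose_sub, transpose_mul, hX.eq, Matrix.sub_mul, Matrix.mul_sub, trace_sub,
    ← Matrix.mul_assoc, nonsing_inv_mul X hXdet, Matrix.one_mul] at hcross ⊢
  linarith

theorem le_trace_inv_mul_transpose_mul_mul {X : Matrix n n ℝ} (hX : X.PosDef)
    {R : Matrix m m ℝ} (hR : R.PosSemidef) (Y Z : Matrix m n ℝ) :
    2 * (Zᵀ * R * Y).trace - (Zᵀ * R * Z * X).trace ≤ (X⁻¹ * Yᵀ * R * Y).trace := by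
  have hsq : ((Y - Z * X)ᵀ * R * (Y - Z * X)).PosSemidef := by
    simpa using hR.conjTranspose_mul_mul_same (Y - Z * X)
  have hrem := hX.inv.posSemidef.trace_mul_nonneg hsq
  rw [trace_inv_mul_transpose_mul_mul_eq (isHermitian_iff_isSymm.mp hX.isHermitian)
    hX.det_pos.ne'.isUnit (isHermitian_iff_isSymm.mp hR.isHermitian) Y Z]
  simp only [Matrix.mul_assoc] at hrem ⊢
  linarith

theorem convexOn_trace_inv_mul_transpose_mul_mul {R : Matrix m m ℝ} (hR : R.PosSemidef) :
    ConvexOn ℝ {p : Matrix n n ℝ × Matrix m n ℝ | p.1.PosDef}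
      (fun p => (p.1⁻¹ * p.2ᵀ * R * p.2).trace) := by
  let g (Z : Matrix m n ℝ) : Matrix n n ℝ × Matrix m n ℝ →ₗ[ℝ] ℝ :=
    2 • (traceLinearMap n ℝ ℝ ∘ₗ mulLeftLinearMap n ℝ (Zᵀ * R) ∘ₗ LinearMap.snd ℝ _ _)
      - traceLinearMap n ℝ ℝ ∘ₗ mulLeftLinearMap n ℝ (Zᵀ * R * Z) ∘ₗ LinearMap.fst ℝ _ _
  have hg (Z : Matrix m n ℝ) (p : Matrix n n ℝ × Matrix m n ℝ) :
      g Z p = 2 * (Zᵀ * R * p.2).trace - (Zᵀ * R * Z * p.1).trace := by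
    simp [g, Matrix.mul_assoc]
  have hs : Convex ℝ {p : Matrix n n ℝ × Matrix m n ℝ | p.1.PosDef} :=
    (convex_setOf_posDef (n := n) (𝕜 := ℝ)).linear_preimage (LinearMap.fst ℝ _ (Matrix m n ℝ))
  refine convexOn_of_isGreatest hs (fun Z => (g Z).convexOn hs) fun p hp =>
    ⟨⟨p.2 * p.1⁻¹, ?attained⟩, ?bound⟩
  case attained =>
    have hsymm := isHermitian_iff_isSymm.mp hp.isHermitian
    have hdet := hp.det_pos.ne'.isUnit
    dsimp only
    rw [hg, trace_inv_mul_transpose_mul_mul_eq hsymm hdet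
      (isHermitian_iff_isSymm.mp hR.isHermitian) _ (p.2 * p.1⁻¹),
      nonsing_inv_mul_cancel_right _ _ hdet]
    simp
  case bound =>
    rintro _ ⟨Z, rfl⟩
    dsimp only
    rw [hg]
    exact le_trace_inv_mul_transpose_mul_mul hp hR p.2 Z

end Matrix

theorem matrixFractional_convexOn_general {n m : ℕ}
    {Q : Matrix (Fin n) (Fin n) ℝ} {R : Matrix (Fin m) (Fin m) ℝ}
    (hR : R.PosDef) :
    ConvexOn ℝ
      {p : Matrix (Fin n) (Fin n) ℝ × Matrix (Fin m) (Fin n) ℝ | p.1.PosDef}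
      (fun p => (Q * p.1 + p.1⁻¹ * p.2ᵀ * R * p.2).trace) := by
  have hfrac := convexOn_trace_inv_mul_transpose_mul_mul (n := Fin n) hR.posSemidef
  have hlin := (traceLinearMap (Fin n) ℝ ℝ ∘ₗ mulLeftLinearMap (Fin n) ℝ Q ∘ₗ
    LinearMap.fst ℝ _ (Matrix (Fin m) (Fin n) ℝ)).convexOn hfrac.1
  simpa only [Pi.add_def, LinearMap.comp_apply, LinearMap.fst_apply, mulLeftLinearMap_apply,
    traceLinearMap_apply, trace_add] using hlin.add hfrac

/-- **Convexity of the matrix fractional function in LQR** (Appendix C.1):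
for `Q ⪰ 0` and `R ≻ 0`, the function
`f(X,Y) = trace(Q·X + X⁻¹·Yᵀ·R·Y)` is jointly convex on the convex set
`{(X,Y) : X symmetric positive definite}`. -/
theorem matrixFractional_convexOn {n m : ℕ}
    {Q : Matrix (Fin n) (Fin n) ℝ} {R : Matrix (Fin m) (Fin m) ℝ}
    (hQ : Q.PosSemidef) (hR : R.PosDef) :
    ConvexOn ℝ
      {p : Matrix (Fin n) (Fin n) ℝ × Matrix (Fin m) (Fin n) ℝ | p.1.PosDef}
      (fun p => (Q * p.1 + p.1⁻¹ * p.2ᵀ * R * p.2).trace) :=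
  matrixFractional_convexOn_general hR
end

section
/- Fix real matrices A ∈ ℝ^{n×n}, B ∈ ℝ^{n×m}, B_w ∈ ℝ^{n×n}, and symmetric matrices Q_h ∈ ℝ^{n×n}, R_h ∈ ℝ^{m×m} (playing the roles of Q^{1/2} and R^{1/2}). Define L_∞ = {(K,γ,P) : K ∈ ℝ^{m×n}, γ ∈ ℝ, P ≻ 0, and the symmetric 4×4 block matrix [[(A+BK)ᵀP + P(A+BK), P·B_w, Q_h, Kᵀ·R_h],[B_wᵀ·P, −γI, 0, 0],[Q_h, 0, −γI, 0],[R_h·K, 0, 0, −γI]] ⪯ 0}, and F_∞ = {(γ,Y,X) : Y ∈ ℝ^{m×n}, X ≻ 0, and [[AX + BY + XAᵀ + YᵀBᵀ, B_w, X·Q_h, Yᵀ·R_h],[B_wᵀ, −γI, 0, 0],[Q_h·X, 0, −γI, 0],[R_h·Y, 0, 0, −γI]] ⪯ 0}. Then Φ_∞(K,γ,P) = (γ, K·P⁻¹, P⁻¹) is a bijection from L_∞ onto F_∞, with inverse (γ,Y,X) ↦ (Y·X⁻¹, γ, X⁻¹). -/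
open Matrix

noncomputable section

/-- A 4×4 block matrix built from 16 blocks. -/
def blk4 {R : Type*} {i1 i2 i3 i4 : Type*}
    (M11 : Matrix i1 i1 R) (M12 : Matrix i1 i2 R) (M13 : Matrix i1 i3 R) (M14 : Matrix i1 i4 R)
    (M21 : Matrix i2 i1 R) (M22 : Matrix i2 i2 R) (M23 : Matrix i2 i3 R) (M24 : Matrix i2 i4 R)
    (M31 : Matrix i3 i1 R) (M32 : Matrix i3 i2 R) (M33 : Matrix i3 i3 R) (M34 : Matrix i3 i4 R)
    (M41 : Matrix i4 i1 R) (M42 : Matrix i4 i2 R) (M43 : Matrix i4 i3 R) (M44 : Matrix i4 i4 R) :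
    Matrix ((i1 ⊕ i2) ⊕ (i3 ⊕ i4)) ((i1 ⊕ i2) ⊕ (i3 ⊕ i4)) R :=
  Matrix.fromBlocks (Matrix.fromBlocks M11 M12 M21 M22) (Matrix.fromBlocks M13 M14 M23 M24)
    (Matrix.fromBlocks M31 M32 M41 M42) (Matrix.fromBlocks M33 M34 M43 M44)

/-- The lifted set `L_∞` of the ECL for state feedback `H∞` control (bounded
real lemma LMI in the variables `(K, γ, P)`). -/
def HinfLifted {n m : ℕ} (A : Matrix (Fin n) (Fin n) ℝ) (B : Matrix (Fin n) (Fin m) ℝ)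
    (Bw Qh : Matrix (Fin n) (Fin n) ℝ) (Rh : Matrix (Fin m) (Fin m) ℝ) :
    Set (Matrix (Fin m) (Fin n) ℝ × ℝ × Matrix (Fin n) (Fin n) ℝ) :=
  {t | t.2.2.PosDef ∧
    (-(blk4
        ((A + B * t.1)ᵀ * t.2.2 + t.2.2 * (A + B * t.1)) (t.2.2 * Bw) Qh (t.1ᵀ * Rh)
        (Bwᵀ * t.2.2) (-(t.2.1 • (1 : Matrix (Fin n) (Fin n) ℝ))) 0 0
        Qh 0 (-(t.2.1 • (1 : Matrix (Fin n) (Fin n) ℝ))) 0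
        (Rh * t.1) 0 0 (-(t.2.1 • (1 : Matrix (Fin m) (Fin m) ℝ))))).PosSemidef}

/-- The convex set `F_∞` of the ECL for state feedback `H∞` control. -/
def HinfCvx {n m : ℕ} (A : Matrix (Fin n) (Fin n) ℝ) (B : Matrix (Fin n) (Fin m) ℝ)
    (Bw Qh : Matrix (Fin n) (Fin n) ℝ) (Rh : Matrix (Fin m) (Fin m) ℝ) :
    Set (ℝ × Matrix (Fin m) (Fin n) ℝ × Matrix (Fin n) (Fin n) ℝ) :=
  {s | s.2.2.PosDef ∧
    (-(blk4
        (A * s.2.2 + B * s.2.1 + s.2.2 * Aᵀ + s.2.1ᵀ * Bᵀ) Bw (s.2.2 * Qh) (s.2.1ᵀ * Rh)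
        Bwᵀ (-(s.1 • (1 : Matrix (Fin n) (Fin n) ℝ))) 0 0
        (Qh * s.2.2) 0 (-(s.1 • (1 : Matrix (Fin n) (Fin n) ℝ))) 0
        (Rh * s.2.1) 0 0 (-(s.1 • (1 : Matrix (Fin m) (Fin m) ℝ))))).PosSemidef}


namespace HinfAux

open Matrix

/-- Block-diagonal congruence matrix `diag(X, I, I, I)`. -/
def Cd (n m : ℕ) (X : Matrix (Fin n) (Fin n) ℝ) :
    Matrix ((Fin n ⊕ Fin n) ⊕ (Fin n ⊕ Fin m)) ((Fin n ⊕ Fin n) ⊕ (Fin n ⊕ Fin m)) ℝ :=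
  blk4 X 0 0 0 0 1 0 0 0 0 1 0 0 0 0 1

variable {n m : ℕ}

lemma Cd_mul (X P : Matrix (Fin n) (Fin n) ℝ) :
    Cd n m X * Cd n m P = Cd n m (X * P) := by
  simp [Cd, blk4, fromBlocks_multiply]

lemma Cd_one : Cd n m 1 = 1 := by
  simp [Cd, blk4]

lemma Cd_transpose (X : Matrix (Fin n) (Fin n) ℝ) : (Cd n m X)ᵀ = Cd n m Xᵀ := by
  simp [Cd, blk4, fromBlocks_transpose]

lemma congrEq (A : Matrix (Fin n) (Fin n) ℝ) (B : Matrix (Fin n) (Fin m) ℝ)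
    (Bw Qh : Matrix (Fin n) (Fin n) ℝ) (Rh : Matrix (Fin m) (Fin m) ℝ)
    (K : Matrix (Fin m) (Fin n) ℝ) (γ : ℝ) (P X : Matrix (Fin n) (Fin n) ℝ)
    (hX : Xᵀ = X) (hXP : X * P = 1) (hPX : P * X = 1) :
    (Cd n m X)ᵀ *
      (blk4
        ((A + B * K)ᵀ * P + P * (A + B * K)) (P * Bw) Qh (Kᵀ * Rh)
        (Bwᵀ * P) (-(γ • (1 : Matrix (Fin n) (Fin n) ℝ))) 0 0
        Qh 0 (-(γ • (1 : Matrix (Fin n) (Fin n) ℝ))) 0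
        (Rh * K) 0 0 (-(γ • (1 : Matrix (Fin m) (Fin m) ℝ)))) * Cd n m X =
    blk4
        (A * X + B * (K * X) + X * Aᵀ + (K * X)ᵀ * Bᵀ) Bw (X * Qh) ((K * X)ᵀ * Rh)
        Bwᵀ (-(γ • (1 : Matrix (Fin n) (Fin n) ℝ))) 0 0
        (Qh * X) 0 (-(γ • (1 : Matrix (Fin n) (Fin n) ℝ))) 0
        (Rh * (K * X)) 0 0 (-(γ • (1 : Matrix (Fin m) (Fin m) ℝ))) := by
  simp only [Cd, blk4, fromBlocks_transpose, fromBlocks_multiply, fromBlocks_add,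
    transpose_zero, transpose_one, hX, Matrix.mul_zero, Matrix.zero_mul, Matrix.mul_one,
    Matrix.one_mul, add_zero, zero_add, Matrix.mul_add, Matrix.add_mul, transpose_add,
    transpose_mul, Matrix.mul_assoc, hXP, hPX]
  refine fromBlocks_inj.mpr ⟨?_, ?_, ?_, ?_⟩ <;>
    refine fromBlocks_inj.mpr ⟨?_, ?_, ?_, ?_⟩ <;>
    simp only [← Matrix.mul_assoc, hXP, hPX, Matrix.one_mul, Matrix.mul_one] <;>
    abel

end HinfAux

set_option maxHeartbeats 2000000 in
/-- **The classical `H∞` state feedback change of variables `Y = K·P⁻¹`,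
`X = P⁻¹`** (Section 4.2.2): `Φ_∞(K,γ,P) = (γ, K·P⁻¹, P⁻¹)` is a bijection
from `L_∞` onto `F_∞`, with inverse `(γ,Y,X) ↦ (Y·X⁻¹, γ, X⁻¹)`. -/
theorem hinf_change_of_variables_bijOn {n m : ℕ}
    (A : Matrix (Fin n) (Fin n) ℝ) (B : Matrix (Fin n) (Fin m) ℝ)
    (Bw Qh : Matrix (Fin n) (Fin n) ℝ) (Rh : Matrix (Fin m) (Fin m) ℝ)
    (hQh : Qh.IsSymm) (hRh : Rh.IsSymm) :
    Set.BijOn (fun t : Matrix (Fin m) (Fin n) ℝ × ℝ × Matrix (Fin n) (Fin n) ℝ =>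
        (t.2.1, t.1 * t.2.2⁻¹, t.2.2⁻¹))
      (HinfLifted A B Bw Qh Rh) (HinfCvx A B Bw Qh Rh) ∧
    Set.InvOn (fun s : ℝ × Matrix (Fin m) (Fin n) ℝ × Matrix (Fin n) (Fin n) ℝ =>
        (s.2.1 * s.2.2⁻¹, s.1, s.2.2⁻¹))
      (fun t : Matrix (Fin m) (Fin n) ℝ × ℝ × Matrix (Fin n) (Fin n) ℝ =>
        (t.2.1, t.1 * t.2.2⁻¹, t.2.2⁻¹))
      (HinfLifted A B Bw Qh Rh) (HinfCvx A B Bw Qh Rh) := by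
    classical
  have symmPD : ∀ M : Matrix (Fin n) (Fin n) ℝ, M.PosDef → Mᵀ = M := by
    intro M hM
    rw [← Matrix.conjTranspose_eq_transpose_of_trivial]
    exact hM.1
  have hmapsL : Set.MapsTo (fun t : Matrix (Fin m) (Fin n) ℝ × ℝ × Matrix (Fin n) (Fin n) ℝ =>
      (t.2.1, t.1 * t.2.2⁻¹, t.2.2⁻¹)) (HinfLifted A B Bw Qh Rh) (HinfCvx A B Bw Qh Rh) := by
    rintro ⟨K, γ, P⟩ ⟨hP, hM⟩
    dsimp only
    have hdet : IsUnit P.det := hP.det_pos.ne'.isUnit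
    have hXpd : (P⁻¹).PosDef := hP.inv
    have hX : (P⁻¹)ᵀ = P⁻¹ := symmPD _ hXpd
    refine ⟨hXpd, ?_⟩
    have hE := HinfAux.congrEq A B Bw Qh Rh K γ P P⁻¹ hX (P.nonsing_inv_mul hdet)
      (P.mul_nonsing_inv hdet)
    have hps := hM.conjTranspose_mul_mul_same (HinfAux.Cd n m P⁻¹)
    rw [Matrix.conjTranspose_eq_transpose_of_trivial, Matrix.mul_neg, Matrix.neg_mul,
      hE] at hps
    exact hps
  have hmapsF : Set.MapsTo (fun s : ℝ × Matrix (Fin m) (Fin n) ℝ × Matrix (Fin n) (Fin n) ℝ =>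
      (s.2.1 * s.2.2⁻¹, s.1, s.2.2⁻¹)) (HinfCvx A B Bw Qh Rh) (HinfLifted A B Bw Qh Rh) := by
    rintro ⟨γ, Y, X⟩ ⟨hXpd, hM⟩
    dsimp only
    have hdet : IsUnit X.det := hXpd.det_pos.ne'.isUnit
    have hP : (X⁻¹).PosDef := hXpd.inv
    have hXsym : Xᵀ = X := symmPD _ hXpd
    have hXi : (X⁻¹)ᵀ = X⁻¹ := symmPD _ hP
    refine ⟨hP, ?_⟩
    have hE := HinfAux.congrEq A B Bw Qh Rh (Y * X⁻¹) γ X⁻¹ X hXsym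
      (X.mul_nonsing_inv hdet) (X.nonsing_inv_mul hdet)
    have hYX : Y * X⁻¹ * X = Y := by
      rw [Matrix.mul_assoc, X.nonsing_inv_mul hdet, Matrix.mul_one]
    rw [hYX] at hE
    have hps := hM.conjTranspose_mul_mul_same (HinfAux.Cd n m X⁻¹)
    rw [Matrix.conjTranspose_eq_transpose_of_trivial, Matrix.mul_neg, Matrix.neg_mul,
      ← hE] at hps
    rw [HinfAux.Cd_transpose, HinfAux.Cd_transpose, hXsym, hXi] at hps
    simp only [← Matrix.mul_assoc] at hps
    rw [HinfAux.Cd_mul, X.nonsing_inv_mul hdet, HinfAux.Cd_one, Matrix.one_mul,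
      Matrix.mul_assoc, HinfAux.Cd_mul, X.mul_nonsing_inv hdet, HinfAux.Cd_one,
      Matrix.mul_one] at hps
    simpa only [Matrix.mul_assoc] using hps
  have hinv : Set.InvOn (fun s : ℝ × Matrix (Fin m) (Fin n) ℝ × Matrix (Fin n) (Fin n) ℝ =>
        (s.2.1 * s.2.2⁻¹, s.1, s.2.2⁻¹))
      (fun t : Matrix (Fin m) (Fin n) ℝ × ℝ × Matrix (Fin n) (Fin n) ℝ =>
        (t.2.1, t.1 * t.2.2⁻¹, t.2.2⁻¹))
      (HinfLifted A B Bw Qh Rh) (HinfCvx A B Bw Qh Rh) := by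
    constructor
    · rintro ⟨K, γ, P⟩ ⟨hP, -⟩
      have hdet : IsUnit P.det := hP.det_pos.ne'.isUnit
      simp only [Prod.mk.injEq]
      refine ⟨?_, trivial, P.nonsing_inv_nonsing_inv hdet⟩
      rw [P.nonsing_inv_nonsing_inv hdet, Matrix.mul_assoc, P.nonsing_inv_mul hdet,
        Matrix.mul_one]
    · rintro ⟨γ, Y, X⟩ ⟨hX, -⟩
      have hdet : IsUnit X.det := hX.det_pos.ne'.isUnit
      simp only [Prod.mk.injEq]
      refine ⟨trivial, ?_, X.nonsing_inv_nonsing_inv hdet⟩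
      rw [X.nonsing_inv_nonsing_inv hdet, Matrix.mul_assoc, X.nonsing_inv_mul hdet,
        Matrix.mul_one]
  exact ⟨hinv.bijOn hmapsL hmapsF, hinv⟩
end
end

section
/- Let X, Y be n×n real symmetric matrices with the 2n×2n block matrix [X, I; I, Y] positive definite, and let Ξ be an invertible n×n real matrix. Then the 2n×2n block matrix [Y, Ξ; Ξᵀ, Ξᵀ(Y − X⁻¹)⁻¹Ξ] is positive definite. -/
/-!
Let `S = Y - X⁻¹`. The Schur complement of `X` in `[X, I; I, Y]` is `S`, so `S ≻ 0` and hence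
`D = Ξᵀ S⁻¹ Ξ ≻ 0`. The Schur complement of `D` in `[Y, Ξ; Ξᵀ, D]` is
`Y - Ξ D⁻¹ Ξᵀ = Y - S = X⁻¹ ≻ 0`.
-/

open Matrix

namespace Matrix

theorem mul_mul_inv_mul_inv_mul_cancel {n α : Type*} [Fintype n] [DecidableEq n] [CommRing α]
    (P Q S : Matrix n n α) [Invertible P] [Invertible Q] [Invertible S] :
    P * (Q * S⁻¹ * P)⁻¹ * Q = S := by
  rw [mul_inv_rev, mul_inv_rev, inv_inv_of_invertible]
  simp [Matrix.mul_assoc]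

section SchurComplement

open scoped ComplexOrder

variable {𝕜 m n : Type*} [RCLike 𝕜] [Fintype m] [Fintype n] [DecidableEq m] [DecidableEq n]

theorem posDef_iff_posSemidef_and_isUnit {M : Matrix n n 𝕜} :
    M.PosDef ↔ M.PosSemidef ∧ IsUnit M :=
  ⟨fun h => ⟨h.posSemidef, h.isUnit⟩, fun ⟨h, hU⟩ => h.posDef_iff_isUnit.mpr hU⟩

theorem PosDef.posDef_fromBlocks₁₁_iff {A : Matrix m m 𝕜} (hA : A.PosDef) [Invertible A]
    (B : Matrix m n 𝕜) (D : Matrix n n 𝕜) :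
    (fromBlocks A B Bᴴ D).PosDef ↔ (D - Bᴴ * A⁻¹ * B).PosDef := by
  rw [posDef_iff_posSemidef_and_isUnit, posDef_iff_posSemidef_and_isUnit,
    hA.fromBlocks₁₁, isUnit_fromBlocks_iff_of_invertible₁₁, invOf_eq_nonsing_inv]

theorem PosDef.posDef_fromBlocks₂₂_iff {D : Matrix n n 𝕜} (hD : D.PosDef) [Invertible D]
    (A : Matrix m m 𝕜) (B : Matrix m n 𝕜) :
    (fromBlocks A B Bᴴ D).PosDef ↔ (A - B * D⁻¹ * Bᴴ).PosDef := by
  rw [posDef_iff_posSemidef_and_isUnit, posDef_iff_posSemidef_and_isUnit,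
    hD.fromBlocks₂₂, isUnit_fromBlocks_iff_of_invertible₂₂, invOf_eq_nonsing_inv]

end SchurComplement

end Matrix

theorem psiP_posDef_general {n : ℕ} {X Y Ξ : Matrix (Fin n) (Fin n) ℝ}
    (hΞ : IsUnit Ξ)
    (hXY : (Matrix.fromBlocks X (1 : Matrix (Fin n) (Fin n) ℝ)
      (1 : Matrix (Fin n) (Fin n) ℝ) Y).PosDef) :
    (Matrix.fromBlocks Y Ξ Ξᵀ (Ξᵀ * (Y - X⁻¹)⁻¹ * Ξ)).PosDef := by
  have hX : X.PosDef := hXY.submatrix Sum.inl_injective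
  have := hX.isUnit.invertible
  have hS : (Y - X⁻¹).PosDef := by
    simpa using (hX.posDef_fromBlocks₁₁_iff 1 Y).mp (by simpa using hXY)
  have hD : (Ξᴴ * (Y - X⁻¹)⁻¹ * Ξ).PosDef :=
    (IsUnit.posDef_star_left_conjugate_iff hΞ).mpr hS.inv
  have := hS.isUnit.invertible
  have := hΞ.invertible
  have := hD.isUnit.invertible
  rw [← conjTranspose_eq_transpose_of_trivial, hD.posDef_fromBlocks₂₂_iff,
    mul_mul_inv_mul_inv_mul_cancel, sub_sub_cancel]
  exact hX.inv

/-- **Lemma D.1, part 1**: if `[X, I; I, Y] ≻ 0` with `X, Y` symmetric and `Ξ`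
invertible, then `Ψ_P(X,Y,Ξ) = [Y, Ξ; Ξᵀ, Ξᵀ(Y − X⁻¹)⁻¹Ξ]` is positive
definite. -/
theorem psiP_posDef {n : ℕ} {X Y Ξ : Matrix (Fin n) (Fin n) ℝ}
    (hX : X.IsSymm) (hY : Y.IsSymm) (hΞ : IsUnit Ξ)
    (hXY : (Matrix.fromBlocks X (1 : Matrix (Fin n) (Fin n) ℝ)
      (1 : Matrix (Fin n) (Fin n) ℝ) Y).PosDef) :
    (Matrix.fromBlocks Y Ξ Ξᵀ (Ξᵀ * (Y - X⁻¹)⁻¹ * Ξ)).PosDef :=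
  psiP_posDef_general hΞ hXY
end

section
/- Let P be a 2n×2n real symmetric positive definite matrix whose top-right n×n block P₁₂ is invertible. Then the 2n×2n block matrix [(P⁻¹)₁₁, I; I, P₁₁] is positive definite, where (P⁻¹)₁₁ is the top-left n×n block of P⁻¹ and P₁₁ is the top-left n×n block of P. -/
/-!
With `B = [I, P₁₁; 0, P₂₁]`, whose second block column is the first block column of `P`,
one has `Bᴴ P⁻¹ B = [(P⁻¹)₁₁, I; I, P₁₁]`: the products `P⁻¹ P = I` and `P P⁻¹ = I` produce
the identity blocks. So the block matrix is congruent to `P⁻¹ ≻ 0`, and the congruence is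
nondegenerate because `P₂₁ = P₁₂ᴴ` is invertible.
-/

open Matrix

namespace Matrix

variable {l m o R : Type*} [Fintype m] [DecidableEq m]

theorem mulVec_injective_fromBlocks_one_zero [Fintype l] [Ring R] {C : Matrix m l R}
    {D : Matrix o l R} (hD : Function.Injective D.mulVec) :
    Function.Injective (fromBlocks (1 : Matrix m m R) C 0 D).mulVec := by
  intro u v huv
  rw [← Sum.elim_comp_inl_inr u, ← Sum.elim_comp_inl_inr v, fromBlocks_mulVec,
    fromBlocks_mulVec] at huv
  have h₂ := hD (by simpa using congrArg (· ∘ Sum.inr) huv)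
  have h₁ : u ∘ Sum.inl = v ∘ Sum.inl := by simpa [h₂] using congrArg (· ∘ Sum.inl) huv
  rw [← Sum.elim_comp_inl_inr u, ← Sum.elim_comp_inl_inr v, h₁, h₂]

variable [Fintype o] [DecidableEq o]

theorem IsHermitian.fromBlocks_toBlocks₁₁_inv_one_one_toBlocks₁₁ [CommRing R] [StarRing R]
    {P : Matrix (m ⊕ o) (m ⊕ o) R} (hP : P.IsHermitian) (hdet : IsUnit P.det) :
    Matrix.fromBlocks (P⁻¹).toBlocks₁₁ 1 1 P.toBlocks₁₁ =
      (Matrix.fromBlocks 1 P.toBlocks₁₁ 0 P.toBlocks₂₁)ᴴ * P⁻¹ *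
        Matrix.fromBlocks 1 P.toBlocks₁₁ 0 P.toBlocks₂₁ := by
  have h₁₁ : P.toBlocks₁₁ᴴ = P.toBlocks₁₁ := congrArg toBlocks₁₁ hP
  have h₂₁ : P.toBlocks₂₁ᴴ = P.toBlocks₁₂ := congrArg toBlocks₁₂ hP
  have hQP := nonsing_inv_mul P hdet
  have hPQ := mul_nonsing_inv P hdet
  set Q := P⁻¹
  rw [← fromBlocks_toBlocks P, ← fromBlocks_toBlocks Q, fromBlocks_multiply, ← fromBlocks_one,
    fromBlocks_inj] at hQP hPQ
  obtain ⟨hQP₁₁, -, -, -⟩ := hQP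
  obtain ⟨hPQ₁₁, hPQ₁₂, -, -⟩ := hPQ
  conv_rhs => rw [← fromBlocks_toBlocks Q]
  rw [fromBlocks_conjTranspose, fromBlocks_multiply, fromBlocks_multiply]
  simp [h₁₁, h₂₁, hQP₁₁, hPQ₁₁, hPQ₁₂]

theorem PosDef.fromBlocks_toBlocks₁₁_inv_one_one_toBlocks₁₁ {K : Type*} [Field K]
    [PartialOrder K] [StarRing K] {P : Matrix (m ⊕ o) (m ⊕ o) K} (hP : P.PosDef)
    (hP₂₁ : Function.Injective P.toBlocks₂₁.mulVec) :
    (fromBlocks (P⁻¹).toBlocks₁₁ 1 1 P.toBlocks₁₁).PosDef := by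
  rw [hP.isHermitian.fromBlocks_toBlocks₁₁_inv_one_one_toBlocks₁₁
    (P.isUnit_iff_isUnit_det.mp hP.isUnit)]
  exact hP.inv.conjTranspose_mul_mul_same (mulVec_injective_fromBlocks_one_zero hP₂₁)

end Matrix

/-- **Lemma D.1, part 2**: if `P ≻ 0` is a `2n×2n` symmetric positive definite
matrix whose top-right `n×n` block `P₁₂` is invertible, then
`[(P⁻¹)₁₁, I; I, P₁₁] ≻ 0`. -/
theorem blocks_of_posDef_posDef {n : ℕ}
    {P : Matrix (Fin n ⊕ Fin n) (Fin n ⊕ Fin n) ℝ}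
    (hP : P.PosDef) (hP12 : IsUnit P.toBlocks₁₂) :
    (Matrix.fromBlocks (P⁻¹).toBlocks₁₁ (1 : Matrix (Fin n) (Fin n) ℝ)
      (1 : Matrix (Fin n) (Fin n) ℝ) P.toBlocks₁₁).PosDef := by
  have h₂₁ : P.toBlocks₁₂ᴴ = P.toBlocks₂₁ := congrArg toBlocks₂₁ hP.isHermitian
  refine hP.fromBlocks_toBlocks₁₁_inv_one_one_toBlocks₁₁ ?_
  rw [← h₂₁]
  exact mulVec_injective_of_isUnit ((isUnit_conjTranspose _).mpr hP12)
end

section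
/- Let X, Y be n×n real symmetric matrices with [X, I; I, Y] ≻ 0 and let Ξ be an invertible n×n real matrix. Define Ψ_P(X,Y,Ξ) = [Y, Ξ; Ξᵀ, Ξᵀ(Y − X⁻¹)⁻¹Ξ]. Then Ψ_P(X,Y,Ξ) is invertible with inverse equal to the block matrix [X, −X(Y − X⁻¹)Ξ⁻ᵀ; −Ξ⁻¹(Y − X⁻¹)X, Ξ⁻¹(YXY − Y)Ξ⁻ᵀ]; in particular, the top-left n×n block of Ψ_P(X,Y,Ξ)⁻¹ equals X. -/
/-!
Write `S = Y - X⁻¹`. It is invertible because it is the Schur complement of `X` in the positive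
definite matrix `[X, I; I, Y]`, whose determinant is `det X * det S`. Conjugating by
`diag(1, Ξ)` reduces the claim to `Ξ = 1`: `Ψ_P = diag(1, Ξᵀ) [Y, I; I, S⁻¹] diag(1, Ξ)` and the
claimed inverse is `diag(1, Ξ⁻¹) [X, -XS; -SX, YXY - Y] diag(1, Ξ⁻ᵀ)`. The product of the two
middle factors is the identity because `XY = XS + I` and `YX = SX + I`. Finally, a one-sided
inverse of a square matrix is two-sided.
-/

open Matrix

namespace Matrix

section Schur

open scoped ComplexOrder

variable {m 𝕜 : Type*} [DecidableEq m] [RCLike 𝕜] {X Y : Matrix m m 𝕜}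

theorem PosDef.of_fromBlocks_one_one (h : (fromBlocks X 1 1 Y).PosDef) : X.PosDef :=
  h.submatrix Sum.inl_injective

theorem isUnit_det_sub_inv_of_posDef_fromBlocks [Fintype m] (h : (fromBlocks X 1 1 Y).PosDef) :
    IsUnit (Y - X⁻¹).det := by
  have := h.of_fromBlocks_one_one.isUnit.invertible
  have hdet := h.det_pos
  rw [det_fromBlocks₁₁, invOf_eq_nonsing_inv, mul_one, one_mul] at hdet
  exact isUnit_iff_ne_zero.2 (right_ne_zero_of_mul hdet.ne')

end Schur

variable {m R : Type*} [Fintype m] [DecidableEq m] [CommRing R]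

theorem fromBlocks_sub_inv_mul_eq_one {X Y : Matrix m m R} (hX : IsUnit X.det)
    (hS : IsUnit (Y - X⁻¹).det) :
    fromBlocks Y 1 1 (Y - X⁻¹)⁻¹ *
      fromBlocks X (-(X * (Y - X⁻¹))) (-((Y - X⁻¹) * X)) (Y * X * Y - Y) = 1 := by
  set S := Y - X⁻¹ with hSdef
  have hY : Y = S + X⁻¹ := by rw [hSdef, sub_add_cancel]
  have hXY : X * Y = X * S + 1 := by rw [hY, mul_add, mul_nonsing_inv X hX]
  have hYX : Y * X = S * X + 1 := by rw [hY, add_mul, nonsing_inv_mul X hX]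
  rw [fromBlocks_multiply, ← fromBlocks_one]
  congr 1
  · rw [hYX]; noncomm_ring
  · rw [Matrix.mul_assoc Y X Y, hXY]; noncomm_ring
  · rw [Matrix.mul_neg, nonsing_inv_mul_cancel_left _ _ hS]; noncomm_ring
  · have hYXY : Y * X * Y - Y = S * (X * Y) := by rw [hYX]; noncomm_ring
    rw [hYXY, nonsing_inv_mul_cancel_left _ _ hS, hXY]; noncomm_ring

theorem fromBlocks_one_zero_zero_mul_fromBlocks_mul {A B C D P Q : Matrix m m R} :
    fromBlocks 1 0 0 Q * fromBlocks A B C D * fromBlocks 1 0 0 P =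
      fromBlocks A (B * P) (Q * C) (Q * D * P) := by
  simp only [fromBlocks_multiply, Matrix.one_mul, Matrix.mul_one, Matrix.zero_mul,
    Matrix.mul_zero, add_zero, zero_add]

theorem fromBlocks_one_zero_zero_mul_eq_one {P Q : Matrix m m R} (h : P * Q = 1) :
    fromBlocks 1 0 0 P * fromBlocks 1 0 0 Q = (1 : Matrix (m ⊕ m) (m ⊕ m) R) := by
  rw [fromBlocks_multiply, h, ← fromBlocks_one]
  simp only [Matrix.one_mul, Matrix.mul_zero, Matrix.zero_mul, add_zero, zero_add]

theorem fromBlocks_sub_inv_conj_mul_eq_one {X Y Ξ : Matrix m m R} (hX : IsUnit X.det)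
    (hS : IsUnit (Y - X⁻¹).det) (hΞ : IsUnit Ξ.det) :
    fromBlocks Y Ξ Ξᵀ (Ξᵀ * (Y - X⁻¹)⁻¹ * Ξ) *
      fromBlocks X (-(X * (Y - X⁻¹) * Ξ⁻¹ᵀ)) (-(Ξ⁻¹ * (Y - X⁻¹) * X))
        (Ξ⁻¹ * (Y * X * Y - Y) * Ξ⁻¹ᵀ) = 1 := by
  have hΨ := fromBlocks_one_zero_zero_mul_fromBlocks_mul (A := Y) (B := 1) (C := 1)
    (D := (Y - X⁻¹)⁻¹) (P := Ξ) (Q := Ξᵀ)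
  have hΨinv := fromBlocks_one_zero_zero_mul_fromBlocks_mul (A := X) (B := -(X * (Y - X⁻¹)))
    (C := -((Y - X⁻¹) * X)) (D := Y * X * Y - Y) (P := Ξ⁻¹ᵀ) (Q := Ξ⁻¹)
  simp only [Matrix.one_mul, Matrix.mul_one, Matrix.neg_mul, Matrix.mul_neg,
    ← Matrix.mul_assoc] at hΨ hΨinv
  rw [← hΨ, ← hΨinv]
  calc _ = fromBlocks 1 0 0 Ξᵀ * (fromBlocks Y 1 1 (Y - X⁻¹)⁻¹ * (fromBlocks 1 0 0 Ξ *
          fromBlocks 1 0 0 Ξ⁻¹) * fromBlocks X (-(X * (Y - X⁻¹))) (-((Y - X⁻¹) * X))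
          (Y * X * Y - Y)) * fromBlocks 1 0 0 Ξ⁻¹ᵀ := by simp only [Matrix.mul_assoc]
    _ = 1 := by
      rw [fromBlocks_one_zero_zero_mul_eq_one (mul_nonsing_inv Ξ hΞ), Matrix.mul_one,
        fromBlocks_sub_inv_mul_eq_one hX hS, Matrix.mul_one, fromBlocks_one_zero_zero_mul_eq_one
        (by rw [← transpose_mul, nonsing_inv_mul Ξ hΞ, transpose_one])]

end Matrix

theorem psiP_inverse_general {n : ℕ} {X Y Ξ : Matrix (Fin n) (Fin n) ℝ}
    (hΞ : IsUnit Ξ)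
    (hXY : (Matrix.fromBlocks X (1 : Matrix (Fin n) (Fin n) ℝ)
      (1 : Matrix (Fin n) (Fin n) ℝ) Y).PosDef) :
    (Matrix.fromBlocks Y Ξ Ξᵀ (Ξᵀ * (Y - X⁻¹)⁻¹ * Ξ)) *
      (Matrix.fromBlocks X (-(X * (Y - X⁻¹) * (Ξ⁻¹)ᵀ))
        (-(Ξ⁻¹ * (Y - X⁻¹) * X)) (Ξ⁻¹ * (Y * X * Y - Y) * (Ξ⁻¹)ᵀ)) = 1 ∧
    (Matrix.fromBlocks X (-(X * (Y - X⁻¹) * (Ξ⁻¹)ᵀ))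
        (-(Ξ⁻¹ * (Y - X⁻¹) * X)) (Ξ⁻¹ * (Y * X * Y - Y) * (Ξ⁻¹)ᵀ)) *
      (Matrix.fromBlocks Y Ξ Ξᵀ (Ξᵀ * (Y - X⁻¹)⁻¹ * Ξ)) = 1 ∧
    (Matrix.fromBlocks Y Ξ Ξᵀ (Ξᵀ * (Y - X⁻¹)⁻¹ * Ξ))⁻¹ =
      Matrix.fromBlocks X (-(X * (Y - X⁻¹) * (Ξ⁻¹)ᵀ))
        (-(Ξ⁻¹ * (Y - X⁻¹) * X)) (Ξ⁻¹ * (Y * X * Y - Y) * (Ξ⁻¹)ᵀ) ∧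
    ((Matrix.fromBlocks Y Ξ Ξᵀ (Ξᵀ * (Y - X⁻¹)⁻¹ * Ξ))⁻¹).toBlocks₁₁ = X := by
  have hX : IsUnit X.det := (isUnit_iff_isUnit_det X).1 hXY.of_fromBlocks_one_one.isUnit
  have hmul := fromBlocks_sub_inv_conj_mul_eq_one hX
    (isUnit_det_sub_inv_of_posDef_fromBlocks hXY) ((isUnit_iff_isUnit_det Ξ).1 hΞ)
  have hinv := inv_eq_right_inv hmul
  exact ⟨hmul, mul_eq_one_comm.1 hmul, hinv, by rw [hinv, toBlocks_fromBlocks₁₁]⟩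

/-- **Explicit inverse of `Ψ_P`** (proof of Lemma D.2): for symmetric `X, Y`
with `[X, I; I, Y] ≻ 0` and invertible `Ξ`, the matrix
`Ψ_P(X,Y,Ξ) = [Y, Ξ; Ξᵀ, Ξᵀ(Y − X⁻¹)⁻¹Ξ]` is invertible with inverse
`[X, −X(Y − X⁻¹)Ξ⁻ᵀ; −Ξ⁻¹(Y − X⁻¹)X, Ξ⁻¹(YXY − Y)Ξ⁻ᵀ]`; in particular the
top-left block of `Ψ_P(X,Y,Ξ)⁻¹` equals `X`. -/
theorem psiP_inverse {n : ℕ} {X Y Ξ : Matrix (Fin n) (Fin n) ℝ}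
    (hX : X.IsSymm) (hY : Y.IsSymm) (hΞ : IsUnit Ξ)
    (hXY : (Matrix.fromBlocks X (1 : Matrix (Fin n) (Fin n) ℝ)
      (1 : Matrix (Fin n) (Fin n) ℝ) Y).PosDef) :
    (Matrix.fromBlocks Y Ξ Ξᵀ (Ξᵀ * (Y - X⁻¹)⁻¹ * Ξ)) *
      (Matrix.fromBlocks X (-(X * (Y - X⁻¹) * (Ξ⁻¹)ᵀ))
        (-(Ξ⁻¹ * (Y - X⁻¹) * X)) (Ξ⁻¹ * (Y * X * Y - Y) * (Ξ⁻¹)ᵀ)) = 1 ∧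
    (Matrix.fromBlocks X (-(X * (Y - X⁻¹) * (Ξ⁻¹)ᵀ))
        (-(Ξ⁻¹ * (Y - X⁻¹) * X)) (Ξ⁻¹ * (Y * X * Y - Y) * (Ξ⁻¹)ᵀ)) *
      (Matrix.fromBlocks Y Ξ Ξᵀ (Ξᵀ * (Y - X⁻¹)⁻¹ * Ξ)) = 1 ∧
    (Matrix.fromBlocks Y Ξ Ξᵀ (Ξᵀ * (Y - X⁻¹)⁻¹ * Ξ))⁻¹ =
      Matrix.fromBlocks X (-(X * (Y - X⁻¹) * (Ξ⁻¹)ᵀ))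
        (-(Ξ⁻¹ * (Y - X⁻¹) * X)) (Ξ⁻¹ * (Y * X * Y - Y) * (Ξ⁻¹)ᵀ) ∧
    ((Matrix.fromBlocks Y Ξ Ξᵀ (Ξᵀ * (Y - X⁻¹)⁻¹ * Ξ))⁻¹).toBlocks₁₁ = X :=
  psiP_inverse_general hΞ hXY
end

section
/- Fix real matrices A ∈ ℝ^{n×n}, B₂ ∈ ℝ^{n×m}, C₂ ∈ ℝ^{p×n}. Let Λ ∈ ℝ^{(m+n)×(p+n)} be arbitrary, let Ξ be an invertible n×n real matrix, and let X, Y be n×n real symmetric matrices with [X, I; I, Y] ≻ 0. Then Φ_Λ(Ψ_K(Λ,X,Y,Ξ), Ψ_P(X,Y,Ξ)) = Λ. -/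
open Matrix

noncomputable section

/-- The mapping `Φ_M(K,P)` arising in output feedback ECL constructions. -/
def PhiM {n m p : ℕ} (A : Matrix (Fin n) (Fin n) ℝ) (B₂ : Matrix (Fin n) (Fin m) ℝ)
    (C₂ : Matrix (Fin p) (Fin n) ℝ)
    (K : Matrix (Fin m ⊕ Fin n) (Fin p ⊕ Fin n) ℝ)
    (P : Matrix (Fin n ⊕ Fin n) (Fin n ⊕ Fin n) ℝ) : Matrix (Fin n) (Fin n) ℝ :=
  P.toBlocks₁₂ * K.toBlocks₂₁ * C₂ * (P⁻¹).toBlocks₁₁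
    + P.toBlocks₁₁ * B₂ * K.toBlocks₁₂ * (P⁻¹).toBlocks₂₁
    + P.toBlocks₁₂ * K.toBlocks₂₂ * (P⁻¹).toBlocks₂₁
    + P.toBlocks₁₁ * (A + B₂ * K.toBlocks₁₁ * C₂) * (P⁻¹).toBlocks₁₁

/-- The mapping `Φ_Λ(K,P)` arising in output feedback ECL constructions. -/
def PhiLam {n m p : ℕ} (A : Matrix (Fin n) (Fin n) ℝ) (B₂ : Matrix (Fin n) (Fin m) ℝ)
    (C₂ : Matrix (Fin p) (Fin n) ℝ)
    (K : Matrix (Fin m ⊕ Fin n) (Fin p ⊕ Fin n) ℝ)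
    (P : Matrix (Fin n ⊕ Fin n) (Fin n ⊕ Fin n) ℝ) :
    Matrix (Fin m ⊕ Fin n) (Fin p ⊕ Fin n) ℝ :=
  Matrix.fromBlocks K.toBlocks₁₁
    (K.toBlocks₁₁ * C₂ * (P⁻¹).toBlocks₁₁ + K.toBlocks₁₂ * (P⁻¹).toBlocks₂₁)
    (P.toBlocks₁₁ * B₂ * K.toBlocks₁₁ + P.toBlocks₁₂ * K.toBlocks₂₁)
    (PhiM A B₂ C₂ K P)

/-- The mapping `Ψ_K(Λ,X,Y,Ξ)` arising in output feedback ECL constructions. -/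
def PsiK {n m p : ℕ} (A : Matrix (Fin n) (Fin n) ℝ) (B₂ : Matrix (Fin n) (Fin m) ℝ)
    (C₂ : Matrix (Fin p) (Fin n) ℝ)
    (Λ : Matrix (Fin m ⊕ Fin n) (Fin p ⊕ Fin n) ℝ)
    (X Y Ξ : Matrix (Fin n) (Fin n) ℝ) :
    Matrix (Fin m ⊕ Fin n) (Fin p ⊕ Fin n) ℝ :=
  (Matrix.fromBlocks (1 : Matrix (Fin m) (Fin m) ℝ) 0 (Y * B₂) Ξ)⁻¹
    * (Λ - Matrix.fromBlocks 0 0 0 (Y * A * X))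
    * (Matrix.fromBlocks (1 : Matrix (Fin p) (Fin p) ℝ) (C₂ * X) 0
        (-(Ξ⁻¹ * (Y - X⁻¹) * X)))⁻¹

/-- The mapping `Ψ_P(X,Y,Ξ)` arising in output feedback ECL constructions. -/
def PsiP {n : ℕ} (X Y Ξ : Matrix (Fin n) (Fin n) ℝ) :
    Matrix (Fin n ⊕ Fin n) (Fin n ⊕ Fin n) ℝ :=
  Matrix.fromBlocks Y Ξ Ξᵀ (Ξᵀ * (Y - X⁻¹)⁻¹ * Ξ)

/-! For every `P`, `Φ_Λ(K, P)` equals `L K R + [0, 0; 0, P₁₁ A (P⁻¹)₁₁]` with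
`L = [I, 0; P₁₁ B₂, P₁₂]` and `R = [I, C₂ (P⁻¹)₁₁; 0, (P⁻¹)₂₁]`. For `P = Ψ_P(X, Y, Ξ)` an explicit
inverse gives `(P⁻¹)₁₁ = X` and `(P⁻¹)₂₁ = -Ξ⁻¹ (Y - X⁻¹) X`, so `L` and `R` are exactly the
factors that `Ψ_K` divides out. The invertibility this needs comes from `[X, I; I, Y] ≻ 0`:
its leading block `X` is positive definite, and its Schur complement `Y - X⁻¹` is invertible. -/

namespace Matrix

theorem PosDef.toBlocks₁₁ {R m n : Type*} [Ring R] [PartialOrder R] [StarRing R]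
    [Fintype m] [Fintype n] {M : Matrix (m ⊕ n) (m ⊕ n) R} (hM : M.PosDef) :
    M.toBlocks₁₁.PosDef :=
  hM.submatrix Sum.inl_injective

end Matrix

theorem phiLam_eq_mul_mul_add {n m p : ℕ} (A : Matrix (Fin n) (Fin n) ℝ)
    (B₂ : Matrix (Fin n) (Fin m) ℝ) (C₂ : Matrix (Fin p) (Fin n) ℝ)
    (K : Matrix (Fin m ⊕ Fin n) (Fin p ⊕ Fin n) ℝ)
    (P : Matrix (Fin n ⊕ Fin n) (Fin n ⊕ Fin n) ℝ) :
    PhiLam A B₂ C₂ K P =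
      fromBlocks 1 0 (P.toBlocks₁₁ * B₂) P.toBlocks₁₂ * K
          * fromBlocks 1 (C₂ * (P⁻¹).toBlocks₁₁) 0 (P⁻¹).toBlocks₂₁
        + fromBlocks 0 0 0 (P.toBlocks₁₁ * A * (P⁻¹).toBlocks₁₁) := by
  conv_rhs => rw [← fromBlocks_toBlocks K]
  simp only [PhiLam, PhiM, fromBlocks_multiply, fromBlocks_add, fromBlocks_inj]
  refine ⟨?_, ?_, ?_, ?_⟩ <;>
    simp only [Matrix.one_mul, Matrix.mul_one, Matrix.zero_mul, Matrix.mul_zero, add_zero,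
      Matrix.add_mul, Matrix.mul_add, Matrix.mul_assoc]
  abel

theorem inv_psiP {n : ℕ} {X Y Ξ : Matrix (Fin n) (Fin n) ℝ} (hX : IsUnit X) (hΞ : IsUnit Ξ)
    (hS : IsUnit (Y - X⁻¹)) :
    (PsiP X Y Ξ)⁻¹ = fromBlocks X (-(X * (Y - X⁻¹) * Ξᵀ⁻¹))
      (-(Ξ⁻¹ * (Y - X⁻¹) * X)) (Ξ⁻¹ * Y * X * (Y - X⁻¹) * Ξᵀ⁻¹) := by
  obtain ⟨S, rfl⟩ : ∃ S, Y = S + X⁻¹ := ⟨Y - X⁻¹, by abel⟩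
  rw [add_sub_cancel_right] at hS ⊢
  have := hX.invertible
  have := hΞ.invertible
  have := hS.invertible
  refine inv_eq_right_inv ?_
  simp only [PsiP, fromBlocks_multiply, ← fromBlocks_one, fromBlocks_inj]
  refine ⟨?_, ?_, ?_, ?_⟩ <;> simp [Matrix.mul_add, Matrix.add_mul, ← Matrix.mul_assoc]

theorem phiLam_psiK_psiP_general {n m p : ℕ}
    (A : Matrix (Fin n) (Fin n) ℝ) (B₂ : Matrix (Fin n) (Fin m) ℝ)
    (C₂ : Matrix (Fin p) (Fin n) ℝ)
    (Λ : Matrix (Fin m ⊕ Fin n) (Fin p ⊕ Fin n) ℝ)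
    {X Y Ξ : Matrix (Fin n) (Fin n) ℝ}
    (hΞ : IsUnit Ξ)
    (hXY : (Matrix.fromBlocks X (1 : Matrix (Fin n) (Fin n) ℝ)
      (1 : Matrix (Fin n) (Fin n) ℝ) Y).PosDef) :
    PhiLam A B₂ C₂ (PsiK A B₂ C₂ Λ X Y Ξ) (PsiP X Y Ξ) = Λ := by
  have hX : X.PosDef := by simpa using hXY.toBlocks₁₁
  have := hX.isUnit.invertible
  have hS : IsUnit (Y - X⁻¹) := by
    simpa using isUnit_fromBlocks_iff_of_invertible₁₁.mp hXY.isUnit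
  have hL : IsUnit (fromBlocks (1 : Matrix (Fin m) (Fin m) ℝ) 0 (Y * B₂) Ξ) :=
    isUnit_fromBlocks_zero₁₂.mpr ⟨isUnit_one, hΞ⟩
  have hR : IsUnit (fromBlocks (1 : Matrix (Fin p) (Fin p) ℝ) (C₂ * X) 0
      (-(Ξ⁻¹ * (Y - X⁻¹) * X))) :=
    isUnit_fromBlocks_zero₂₁.mpr
      ⟨isUnit_one, (((isUnit_nonsing_inv_iff.mpr hΞ).mul hS).mul hX.isUnit).neg⟩
  rw [phiLam_eq_mul_mul_add, inv_psiP hX.isUnit hΞ hS, PsiK]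
  simp only [PsiP, toBlocks_fromBlocks₁₁, toBlocks_fromBlocks₁₂, toBlocks_fromBlocks₂₁]
  rw [Matrix.mul_assoc _ _ (_⁻¹),
    mul_nonsing_inv_cancel_left _ _ ((isUnit_iff_isUnit_det _).mp hL),
    nonsing_inv_mul_cancel_right _ _ ((isUnit_iff_isUnit_det _).mp hR), sub_add_cancel]

/-- **Lemma D.2**: for any `Λ`, invertible `Ξ`, and symmetric `X, Y` with
`[X, I; I, Y] ≻ 0`, we have `Φ_Λ(Ψ_K(Λ,X,Y,Ξ), Ψ_P(X,Y,Ξ)) = Λ`. -/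
theorem phiLam_psiK_psiP {n m p : ℕ}
    (A : Matrix (Fin n) (Fin n) ℝ) (B₂ : Matrix (Fin n) (Fin m) ℝ)
    (C₂ : Matrix (Fin p) (Fin n) ℝ)
    (Λ : Matrix (Fin m ⊕ Fin n) (Fin p ⊕ Fin n) ℝ)
    {X Y Ξ : Matrix (Fin n) (Fin n) ℝ}
    (hX : X.IsSymm) (hY : Y.IsSymm) (hΞ : IsUnit Ξ)
    (hXY : (Matrix.fromBlocks X (1 : Matrix (Fin n) (Fin n) ℝ)
      (1 : Matrix (Fin n) (Fin n) ℝ) Y).PosDef) :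
    PhiLam A B₂ C₂ (PsiK A B₂ C₂ Λ X Y Ξ) (PsiP X Y Ξ) = Λ :=
  phiLam_psiK_psiP_general A B₂ C₂ Λ hΞ hXY
end
end

section
/- Fix real matrices A ∈ ℝ^{n×n}, B₂ ∈ ℝ^{n×m}, C₂ ∈ ℝ^{p×n}. Let K ∈ ℝ^{(m+n)×(p+n)} be arbitrary and let P be a 2n×2n real symmetric positive definite matrix with P₁₂ invertible. Then Ψ_P((P⁻¹)₁₁, P₁₁, P₁₂) = P and Ψ_K(Φ_Λ(K,P), (P⁻¹)₁₁, P₁₁, P₁₂) = K. -/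
open Matrix

noncomputable section

/-!
Write `Q = P⁻¹` and `(X, Y, Ξ) = (Q₁₁, P₁₁, P₁₂)`. The first block column of `P * Q = 1` gives
`Q₂₁ = -P₂₂⁻¹ P₂₁ Q₁₁` and the Schur complement identity `Q₁₁⁻¹ = P₁₁ - P₁₂ P₂₂⁻¹ P₂₁`, hence
`Y - X⁻¹ = P₁₂ P₂₂⁻¹ P₂₁`. By symmetry the last block of `Ψ_P` is then
`P₂₁ (P₁₂ P₂₂⁻¹ P₂₁)⁻¹ P₁₂ = P₂₂`, and `-Ξ⁻¹ (Y - X⁻¹) X = Q₂₁`. Finally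
`Φ_Λ(K,P) - diag(0, Y A X) = [I, 0; Y B₂, Ξ] * K * [I, C₂ X; 0, Q₂₁]`, and `Ψ_K` removes exactly
these two invertible factors.
-/

namespace Matrix

theorem IsSymm.transpose_toBlocks₁₂ {l m α : Type*} {P : Matrix (l ⊕ m) (l ⊕ m) α}
    (h : P.IsSymm) : P.toBlocks₁₂ᵀ = P.toBlocks₂₁ :=
  congr_arg toBlocks₂₁ h

section Semiring

variable {l m n o α : Type*} [Fintype l] [Fintype m] [NonUnitalNonAssocSemiring α]

theorem toBlocks₁₁_mul (M : Matrix (n ⊕ o) (l ⊕ m) α) (N : Matrix (l ⊕ m) (n ⊕ o) α) :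
    (M * N).toBlocks₁₁ = M.toBlocks₁₁ * N.toBlocks₁₁ + M.toBlocks₁₂ * N.toBlocks₂₁ := by
  ext i j
  simp [mul_apply, Fintype.sum_sum_type, toBlocks₁₁, toBlocks₁₂, toBlocks₂₁]

theorem toBlocks₂₁_mul (M : Matrix (n ⊕ o) (l ⊕ m) α) (N : Matrix (l ⊕ m) (n ⊕ o) α) :
    (M * N).toBlocks₂₁ = M.toBlocks₂₁ * N.toBlocks₁₁ + M.toBlocks₂₂ * N.toBlocks₂₁ := by
  ext i j
  simp [mul_apply, Fintype.sum_sum_type, toBlocks₁₁, toBlocks₂₁, toBlocks₂₂]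

end Semiring

variable {l m R : Type*} [Fintype l] [Fintype m] [DecidableEq l] [DecidableEq m] [CommRing R]

section

variable {P : Matrix (l ⊕ m) (l ⊕ m) R}

theorem toBlocks₂₁_inv (hP : IsUnit P.det) (h₂₂ : IsUnit P.toBlocks₂₂.det) :
    (P⁻¹).toBlocks₂₁ = -(P.toBlocks₂₂⁻¹ * P.toBlocks₂₁ * (P⁻¹).toBlocks₁₁) := by
  have h : P.toBlocks₂₁ * (P⁻¹).toBlocks₁₁ + P.toBlocks₂₂ * (P⁻¹).toBlocks₂₁ = 0 := by
    rw [← toBlocks₂₁_mul, mul_nonsing_inv P hP, ← fromBlocks_one, toBlocks_fromBlocks₂₁]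
  rw [← nonsing_inv_mul_cancel_left _ (P⁻¹).toBlocks₂₁ h₂₂, eq_neg_of_add_eq_zero_right h,
    Matrix.mul_neg, Matrix.mul_assoc]

theorem schur_mul_toBlocks₁₁_inv (hP : IsUnit P.det) (h₂₂ : IsUnit P.toBlocks₂₂.det) :
    (P.toBlocks₁₁ - P.toBlocks₁₂ * P.toBlocks₂₂⁻¹ * P.toBlocks₂₁) * (P⁻¹).toBlocks₁₁ = 1 := by
  have h : P.toBlocks₁₁ * (P⁻¹).toBlocks₁₁ + P.toBlocks₁₂ * (P⁻¹).toBlocks₂₁ = 1 := by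
    rw [← toBlocks₁₁_mul, mul_nonsing_inv P hP, ← fromBlocks_one, toBlocks_fromBlocks₁₁]
  rw [toBlocks₂₁_inv hP h₂₂] at h
  rw [← h, Matrix.sub_mul, Matrix.mul_neg, sub_eq_add_neg, Matrix.mul_assoc _ _ (P⁻¹).toBlocks₁₁,
    Matrix.mul_assoc, Matrix.mul_assoc]

theorem isUnit_det_toBlocks₁₁_inv (hP : IsUnit P.det) (h₂₂ : IsUnit P.toBlocks₂₂.det) :
    IsUnit (P⁻¹).toBlocks₁₁.det :=
  isUnit_det_of_left_inverse (schur_mul_toBlocks₁₁_inv hP h₂₂)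

theorem sub_inv_toBlocks₁₁_inv (hP : IsUnit P.det) (h₂₂ : IsUnit P.toBlocks₂₂.det) :
    P.toBlocks₁₁ - ((P⁻¹).toBlocks₁₁)⁻¹ = P.toBlocks₁₂ * P.toBlocks₂₂⁻¹ * P.toBlocks₂₁ := by
  rw [inv_eq_left_inv (schur_mul_toBlocks₁₁_inv hP h₂₂), sub_sub_cancel]

end

theorem isUnit_det_toBlocks₂₁_inv {P : Matrix (l ⊕ l) (l ⊕ l) R} (hP : IsUnit P.det)
    (h₂₁ : IsUnit P.toBlocks₂₁.det) (h₂₂ : IsUnit P.toBlocks₂₂.det) :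
    IsUnit (P⁻¹).toBlocks₂₁.det := by
  rw [toBlocks₂₁_inv hP h₂₂, det_neg, det_mul, det_mul]
  exact (isUnit_neg_one.pow _).mul
    (((isUnit_nonsing_inv_det _ h₂₂).mul h₂₁).mul (isUnit_det_toBlocks₁₁_inv hP h₂₂))

end Matrix

section

variable {n m p : ℕ} (A : Matrix (Fin n) (Fin n) ℝ) (B₂ : Matrix (Fin n) (Fin m) ℝ)
  (C₂ : Matrix (Fin p) (Fin n) ℝ) (K : Matrix (Fin m ⊕ Fin n) (Fin p ⊕ Fin n) ℝ)
  (P : Matrix (Fin n ⊕ Fin n) (Fin n ⊕ Fin n) ℝ)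

theorem phiLam_sub_eq_mul_mul :
    PhiLam A B₂ C₂ K P - fromBlocks 0 0 0 (P.toBlocks₁₁ * A * (P⁻¹).toBlocks₁₁) =
      fromBlocks 1 0 (P.toBlocks₁₁ * B₂) P.toBlocks₁₂ * K *
        fromBlocks 1 (C₂ * (P⁻¹).toBlocks₁₁) 0 (P⁻¹).toBlocks₂₁ := by
  conv_rhs => rw [← fromBlocks_toBlocks K, fromBlocks_multiply, fromBlocks_multiply]
  rw [PhiLam, PhiM, sub_eq_add_neg, fromBlocks_neg, fromBlocks_add, fromBlocks_inj]
  refine ⟨?_, ?_, ?_, ?_⟩ <;>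
    simp only [Matrix.mul_add, Matrix.add_mul, Matrix.mul_assoc, Matrix.mul_one, Matrix.one_mul,
      Matrix.mul_zero, Matrix.zero_mul, add_zero, neg_zero]
  abel

variable {P}

theorem psiK_phiLam_eq_self (hP : IsUnit P.det) (h₁₂ : IsUnit P.toBlocks₁₂.det)
    (h₂₁ : IsUnit P.toBlocks₂₁.det) (h₂₂ : IsUnit P.toBlocks₂₂.det) :
    PsiK A B₂ C₂ (PhiLam A B₂ C₂ K P) (P⁻¹).toBlocks₁₁ P.toBlocks₁₁ P.toBlocks₁₂ = K := by
  have hQ₂₁ : -(P.toBlocks₁₂⁻¹ * (P.toBlocks₁₁ - ((P⁻¹).toBlocks₁₁)⁻¹) * (P⁻¹).toBlocks₁₁) =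
      (P⁻¹).toBlocks₂₁ := by
    rw [sub_inv_toBlocks₁₁_inv hP h₂₂, toBlocks₂₁_inv hP h₂₂, Matrix.mul_assoc P.toBlocks₁₂,
      nonsing_inv_mul_cancel_left _ _ h₁₂]
  have hL : IsUnit (fromBlocks (1 : Matrix (Fin m) (Fin m) ℝ) 0
      (P.toBlocks₁₁ * B₂) P.toBlocks₁₂).det := by
    rwa [det_fromBlocks_zero₁₂, det_one, one_mul]
  have hR : IsUnit (fromBlocks (1 : Matrix (Fin p) (Fin p) ℝ) (C₂ * (P⁻¹).toBlocks₁₁)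
      0 (P⁻¹).toBlocks₂₁).det := by
    rw [det_fromBlocks_zero₂₁, det_one, one_mul]
    exact isUnit_det_toBlocks₂₁_inv hP h₂₁ h₂₂
  rw [PsiK, hQ₂₁, phiLam_sub_eq_mul_mul, Matrix.mul_assoc _ K, nonsing_inv_mul_cancel_left _ _ hL,
    mul_nonsing_inv_cancel_right _ _ hR]

theorem psiP_toBlocks_eq_self (hPs : P.IsSymm) (hP : IsUnit P.det)
    (h₁₂ : IsUnit P.toBlocks₁₂.det) (h₂₁ : IsUnit P.toBlocks₂₁.det)
    (h₂₂ : IsUnit P.toBlocks₂₂.det) :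
    PsiP (P⁻¹).toBlocks₁₁ P.toBlocks₁₁ P.toBlocks₁₂ = P := by
  rw [PsiP, sub_inv_toBlocks₁₁_inv hP h₂₂, hPs.transpose_toBlocks₁₂, Matrix.mul_inv_rev,
    Matrix.mul_inv_rev, nonsing_inv_nonsing_inv _ h₂₂, mul_nonsing_inv_cancel_left _ _ h₂₁,
    nonsing_inv_mul_cancel_right _ _ h₁₂, fromBlocks_toBlocks]

end

/-- **Lemma D.3**: for any `K` and symmetric positive definite `P` with `P₁₂`
invertible, `Ψ_P((P⁻¹)₁₁, P₁₁, P₁₂) = P` and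
`Ψ_K(Φ_Λ(K,P), (P⁻¹)₁₁, P₁₁, P₁₂) = K`. -/
theorem psiP_psiK_of_phiLam {n m p : ℕ}
    (A : Matrix (Fin n) (Fin n) ℝ) (B₂ : Matrix (Fin n) (Fin m) ℝ)
    (C₂ : Matrix (Fin p) (Fin n) ℝ)
    (K : Matrix (Fin m ⊕ Fin n) (Fin p ⊕ Fin n) ℝ)
    {P : Matrix (Fin n ⊕ Fin n) (Fin n ⊕ Fin n) ℝ}
    (hP : P.PosDef) (hP12 : IsUnit P.toBlocks₁₂) :
    PsiP (P⁻¹).toBlocks₁₁ P.toBlocks₁₁ P.toBlocks₁₂ = P ∧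
    PsiK A B₂ C₂ (PhiLam A B₂ C₂ K P) (P⁻¹).toBlocks₁₁ P.toBlocks₁₁ P.toBlocks₁₂ = K := by
  have hsymm : P.IsSymm := by
    simpa [IsSymm, IsHermitian, conjTranspose_eq_transpose_of_trivial] using hP.isHermitian
  have hdet : IsUnit P.det := hP.det_pos.ne'.isUnit
  have h₁₂ : IsUnit P.toBlocks₁₂.det := (isUnit_iff_isUnit_det _).1 hP12
  have h₂₁ : IsUnit P.toBlocks₂₁.det := by
    rwa [← hsymm.transpose_toBlocks₁₂, det_transpose]
  have h₂₂ : IsUnit P.toBlocks₂₂.det := (hP.submatrix Sum.inr_injective).det_pos.ne'.isUnit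
  exact ⟨psiP_toBlocks_eq_self hsymm hdet h₁₂ h₂₁ h₂₂,
    psiK_phiLam_eq_self A B₂ C₂ K hdet h₁₂ h₂₁ h₂₂⟩
end
end

section
/- Let Q ∈ ℝ^{a×b} and M ∈ ℝ^{b×a} be real matrices such that I_a + Q·M is invertible. Set K = (I_a + Q·M)⁻¹·Q. Then I_b − M·K is invertible and K·(I_b − M·K)⁻¹ = Q. Conversely, if K ∈ ℝ^{a×b} is such that I_b − M·K is invertible and Q = K·(I_b − M·K)⁻¹, then I_a + Q·M is invertible and (I_a + Q·M)⁻¹·Q = K. In other words, the maps ℋ(Q) = (I + Q·M)⁻¹·Q and ℋ⁻¹(K) = K·(I − M·K)⁻¹ are mutually inverse bijections between {Q : I + Q·M invertible} and {K : I − M·K invertible}. -/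
open Matrix

/-!
By the Weinstein–Aronszajn identity `det (1 + Q M) = det (1 + M Q)`, the matrices `1 + Q M`
and `1 + M Q` are invertible together, and the push-through identity
`(1 + Q M)⁻¹ Q = Q (1 + M Q)⁻¹` follows. Hence
`1 - M ℋ(Q) = 1 - M Q (1 + M Q)⁻¹ = (1 + M Q)⁻¹`, whose inverse is `1 + M Q`, so
`ℋ(Q) (1 - M ℋ(Q))⁻¹ = Q`. Symmetrically `K (1 - M K)⁻¹ = (1 - K M)⁻¹ K`, so
`1 + ℋ⁻¹(K) M = (1 - K M)⁻¹`, and `(1 + ℋ⁻¹(K) M)⁻¹ ℋ⁻¹(K) = K`.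
-/

namespace Matrix

variable {m n α : Type*} [Fintype m] [Fintype n] [DecidableEq m] [DecidableEq n] [CommRing α]

theorem isUnit_one_add_mul_comm (A : Matrix m n α) (B : Matrix n m α) :
    IsUnit (1 + A * B) ↔ IsUnit (1 + B * A) := by
  rw [isUnit_iff_isUnit_det, isUnit_iff_isUnit_det, det_one_add_mul_comm]

theorem isUnit_one_sub_mul_comm (A : Matrix m n α) (B : Matrix n m α) :
    IsUnit (1 - A * B) ↔ IsUnit (1 - B * A) := by
  rw [isUnit_iff_isUnit_det, isUnit_iff_isUnit_det, det_one_sub_mul_comm]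

/-- No invertibility hypothesis is needed: when `1 + A * B` is singular so is `1 + B * A`, and
both sides are `0` by the junk value of `⁻¹`. -/
theorem inv_one_add_mul_mul_eq_mul_inv (A : Matrix m n α) (B : Matrix n m α) :
    (1 + A * B)⁻¹ * A = A * (1 + B * A)⁻¹ := by
  by_cases h : IsUnit (1 + A * B).det
  · have h' : IsUnit (1 + B * A).det := by rwa [← det_one_add_mul_comm]
    calc (1 + A * B)⁻¹ * A = (1 + A * B)⁻¹ * (A * (1 + B * A)) * (1 + B * A)⁻¹ := by
          rw [Matrix.mul_assoc, mul_nonsing_inv_cancel_right _ _ h']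
      _ = (1 + A * B)⁻¹ * ((1 + A * B) * A) * (1 + B * A)⁻¹ := by
          simp only [Matrix.mul_add, Matrix.add_mul, Matrix.mul_one, Matrix.one_mul,
            Matrix.mul_assoc]
      _ = A * (1 + B * A)⁻¹ := by rw [nonsing_inv_mul_cancel_left _ _ h]
  · have h' : ¬IsUnit (1 + B * A).det := by rwa [← det_one_add_mul_comm]
    rw [nonsing_inv_apply_not_isUnit _ h, nonsing_inv_apply_not_isUnit _ h', Matrix.zero_mul,
      Matrix.mul_zero]

theorem mul_inv_one_sub_mul_eq_inv_mul (A : Matrix m n α) (B : Matrix n m α) :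
    A * (1 - B * A)⁻¹ = (1 - A * B)⁻¹ * A := by
  simpa [sub_eq_add_neg] using (inv_one_add_mul_mul_eq_mul_inv (-A) B).symm

theorem one_sub_mul_inv_one_add {P : Matrix n n α} (h : IsUnit (1 + P)) :
    1 - P * (1 + P)⁻¹ = (1 + P)⁻¹ := by
  calc 1 - P * (1 + P)⁻¹ = (1 + P) * (1 + P)⁻¹ - P * (1 + P)⁻¹ := by
        rw [mul_nonsing_inv _ ((isUnit_iff_isUnit_det _).1 h)]
    _ = (1 + P)⁻¹ := by rw [Matrix.add_mul, Matrix.one_mul, add_sub_cancel_right]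

theorem one_add_inv_one_sub_mul {P : Matrix n n α} (h : IsUnit (1 - P)) :
    1 + (1 - P)⁻¹ * P = (1 - P)⁻¹ := by
  calc 1 + (1 - P)⁻¹ * P = (1 - P)⁻¹ * (1 - P) + (1 - P)⁻¹ * P := by
        rw [nonsing_inv_mul _ ((isUnit_iff_isUnit_det _).1 h)]
    _ = (1 - P)⁻¹ := by rw [← Matrix.mul_add, sub_add_cancel, Matrix.mul_one]

end Matrix

/-- **Quadratic invariance change of variables** (Section 4.4): the maps
`ℋ(Q) = (I + Q·M)⁻¹·Q` and `ℋ⁻¹(K) = K·(I − M·K)⁻¹` are mutually inverse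
bijections between `{Q : I + Q·M invertible}` and `{K : I − M·K invertible}`. -/
theorem qi_change_of_variables {a b : ℕ} (M : Matrix (Fin b) (Fin a) ℝ) :
    (∀ Q : Matrix (Fin a) (Fin b) ℝ, IsUnit (1 + Q * M) →
      IsUnit (1 - M * ((1 + Q * M)⁻¹ * Q)) ∧
      ((1 + Q * M)⁻¹ * Q) * (1 - M * ((1 + Q * M)⁻¹ * Q))⁻¹ = Q) ∧
    (∀ K : Matrix (Fin a) (Fin b) ℝ, IsUnit (1 - M * K) →
      IsUnit (1 + (K * (1 - M * K)⁻¹) * M) ∧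
      (1 + (K * (1 - M * K)⁻¹) * M)⁻¹ * (K * (1 - M * K)⁻¹) = K) := by
  refine ⟨fun Q hQ => ?_, fun K hK => ?_⟩
  · have hMQ : IsUnit (1 + M * Q) := (isUnit_one_add_mul_comm Q M).1 hQ
    have hpush := inv_one_add_mul_mul_eq_mul_inv Q M
    have h : 1 - M * ((1 + Q * M)⁻¹ * Q) = (1 + M * Q)⁻¹ := by
      rw [hpush, ← Matrix.mul_assoc, one_sub_mul_inv_one_add hMQ]
    have hdet := (isUnit_iff_isUnit_det _).1 hMQ
    rw [h, hpush, nonsing_inv_nonsing_inv _ hdet]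
    exact ⟨isUnit_nonsing_inv_iff.2 hMQ, nonsing_inv_mul_cancel_right _ _ hdet⟩
  · have hKM : IsUnit (1 - K * M) := (isUnit_one_sub_mul_comm M K).1 hK
    have h : 1 + K * (1 - M * K)⁻¹ * M = (1 - K * M)⁻¹ := by
      rw [mul_inv_one_sub_mul_eq_inv_mul, Matrix.mul_assoc, one_add_inv_one_sub_mul hKM]
    have hdet := (isUnit_iff_isUnit_det _).1 hKM
    rw [h, mul_inv_one_sub_mul_eq_inv_mul, nonsing_inv_nonsing_inv _ hdet]
    exact ⟨isUnit_nonsing_inv_iff.2 hKM, mul_nonsing_inv_cancel_left _ _ hdet⟩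
end
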